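/- arXiv:2205.02654 — 13 statements merged into one kernel-verified Lean document; each statement's English description precedes it below -/
import Mathlib

section
/- Let S be a finite set and R = {X_1, ..., X_ℓ} a collection of subsets of S with X_1 ⊊ X_2 ⊊ ... ⊊ X_ℓ. Define φ(S, R) as the number of permutations of S that do not have any set in R as a prefix (a set X is a prefix of a permutation if the first |X| elements of the permutation are exactly the elements of X). Then φ(S, R) = |S|! − Σ_{i=1}^{ℓ} |S \ X_i|! · φ(X_i, {X_1, ..., X_{i−1}}). -/
/-!
Split the permutations of `S` that have some `X i` as a prefix according to the first index
`i` for which they do. A permutation whose first such prefix is `X i` is a permutation of `X i`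
avoiding the smaller prefixes `X j`, `j < i` (a condition on its first `|X i|` entries only,
because the chain is strictly increasing), followed by an arbitrary permutation of `S \ X i`.
-/

/-- `phi S R` is the number of permutations (nodup lists enumerating `S`) of the
finite set `S` that do not have any set `X ∈ R` as a prefix, where a set `X` is a
prefix of a list if the first `|X|` elements of the list are exactly the elements of `X`. -/
noncomputable def phi {α : Type*} [DecidableEq α] (S : Finset α) (R : Set (Finset α)) : ℕ :=
  Nat.card {l : List α // l.Nodup ∧ l.toFinset = S ∧ ∀ X ∈ R, (l.take X.card).toFinset ≠ X}

open Finset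

namespace List

variable {α : Type*} [DecidableEq α]

def HasPrefixSet (l : List α) (X : Finset α) : Prop := (l.take X.card).toFinset = X

instance (l : List α) (X : Finset α) : Decidable (l.HasPrefixSet X) :=
  inferInstanceAs (Decidable ((l.take X.card).toFinset = X))

theorem hasPrefixSet_take_iff {l : List α} {X : Finset α} {n : ℕ} (h : X.card ≤ n) :
    (l.take n).HasPrefixSet X ↔ l.HasPrefixSet X := by
  rw [HasPrefixSet, HasPrefixSet, take_take, min_eq_left h]

end List

namespace Finset

variable {α : Type*} [DecidableEq α]

noncomputable def enumerations (S : Finset α) : Finset (List α) :=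
  S.toList.permutations.toFinset

theorem mem_enumerations {S : Finset α} {l : List α} :
    l ∈ S.enumerations ↔ l.Nodup ∧ l.toFinset = S := by
  rw [enumerations, List.mem_toFinset, List.mem_permutations]
  constructor
  · intro h
    refine ⟨h.nodup_iff.mpr S.nodup_toList, ?_⟩
    ext a
    rw [List.mem_toFinset, h.mem_iff, mem_toList]
  · rintro ⟨hl, rfl⟩
    exact List.perm_of_nodup_nodup_toFinset_eq hl (nodup_toList _) (toList_toFinset _).symm

theorem card_enumerations (S : Finset α) : #S.enumerations = (#S).factorial := by
  rw [enumerations, List.toFinset_card_of_nodup (List.nodup_permutations _ S.nodup_toList),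
    List.length_permutations, length_toList]

theorem length_eq_card_of_mem_enumerations {S : Finset α} {l : List α}
    (hl : l ∈ S.enumerations) : l.length = S.card := by
  obtain ⟨hnd, rfl⟩ := mem_enumerations.mp hl
  exact (List.toFinset_card_of_nodup hnd).symm

theorem append_mem_enumerations {S X : Finset α} {p q : List α} (hXS : X ⊆ S)
    (hp : p ∈ X.enumerations) (hq : q ∈ (S \ X).enumerations) : p ++ q ∈ S.enumerations := by
  obtain ⟨hpnd, rfl⟩ := mem_enumerations.mp hp
  obtain ⟨hqnd, hqS⟩ := mem_enumerations.mp hq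
  have hdisj : Disjoint p.toFinset q.toFinset := hqS ▸ disjoint_sdiff
  refine mem_enumerations.mpr ⟨List.nodup_append'.mpr ⟨hpnd, hqnd, ?_⟩, ?_⟩
  · exact List.disjoint_toFinset_iff_disjoint.mp hdisj
  · rw [List.toFinset_append, hqS, union_sdiff_of_subset hXS]

theorem take_mem_enumerations {X : Finset α} {l : List α} (hl : l.Nodup)
    (hX : l.HasPrefixSet X) : l.take X.card ∈ X.enumerations :=
  mem_enumerations.mpr ⟨hl.sublist (List.take_sublist _ _), hX⟩

theorem drop_mem_enumerations_sdiff {S X : Finset α} {l : List α} (hl : l ∈ S.enumerations)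
    (hX : l.HasPrefixSet X) : l.drop X.card ∈ (S \ X).enumerations := by
  obtain ⟨hnd, rfl⟩ := mem_enumerations.mp hl
  rw [← List.take_append_drop X.card l, List.nodup_append'] at hnd
  obtain ⟨-, hdrop, hdisj⟩ := hnd
  refine mem_enumerations.mpr ⟨hdrop, ?_⟩
  have hX' : (l.take X.card).toFinset = X := hX
  have hdisj' := List.disjoint_toFinset_iff_disjoint.mpr hdisj
  rw [hX'] at hdisj'
  conv_rhs => rw [← List.take_append_drop X.card l, List.toFinset_append, hX']
  rw [union_sdiff_cancel_left hdisj']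

/-- Cutting off the first `|X|` entries is a bijection from the enumerations of `S` with prefix
set `X` onto pairs of enumerations of `X` and of `S \ X`. -/
theorem card_filter_hasPrefixSet {S X : Finset α} (hXS : X ⊆ S) (P : List α → Prop)
    [DecidablePred P] :
    #{l ∈ S.enumerations | l.HasPrefixSet X ∧ P (l.take X.card)} =
      #{p ∈ X.enumerations | P p} * (#(S \ X)).factorial := by
  rw [← card_enumerations, ← card_product]
  refine card_bij' (fun l _ => (l.take X.card, l.drop X.card)) (fun pq _ => pq.1 ++ pq.2)
    ?_ ?_ ?_ ?_
  · intro l hl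
    obtain ⟨hlS, hX, hP⟩ := mem_filter.mp hl
    exact mem_product.mpr ⟨mem_filter.mpr ⟨take_mem_enumerations (mem_enumerations.mp hlS).1 hX,
      hP⟩, drop_mem_enumerations_sdiff hlS hX⟩
  · rintro ⟨p, q⟩ hpq
    obtain ⟨hp, hq⟩ := mem_product.mp hpq
    obtain ⟨hpX, hP⟩ := mem_filter.mp hp
    have htake : (p ++ q).take X.card = p := by
      rw [← length_eq_card_of_mem_enumerations hpX, List.take_left]
    dsimp only
    rw [mem_filter, List.HasPrefixSet, htake, (mem_enumerations.mp hpX).2]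
    exact ⟨append_mem_enumerations hXS hpX hq, rfl, hP⟩
  · intro l _
    exact List.take_append_drop _ l
  · rintro ⟨p, q⟩ hpq
    obtain ⟨hpX, -⟩ := mem_filter.mp (mem_product.mp hpq).1
    rw [← length_eq_card_of_mem_enumerations hpX, List.take_left, List.drop_left]

theorem card_eq_card_filter_forall_not_add_sum_card_filter_first {ι β : Type*} [Fintype ι]
    [LinearOrder ι] [DecidableEq β] (s : Finset β) (P : ι → β → Prop)
    [∀ i, DecidablePred (P i)] :
    #s = #{x ∈ s | ∀ i, ¬ P i x} + ∑ i, #{x ∈ s | P i x ∧ ∀ j < i, ¬ P j x} := by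
  have hunion : {x ∈ s | ¬ ∀ i, ¬ P i x} =
      univ.biUnion fun i => {x ∈ s | P i x ∧ ∀ j < i, ¬ P j x} := by
    ext x
    simp only [mem_filter, mem_biUnion, mem_univ, true_and, not_forall, not_not]
    constructor
    · rintro ⟨hx, i, hi⟩
      obtain ⟨i₀, hi₀, hmin⟩ := wellFounded_lt.has_min {i | P i x} ⟨i, hi⟩
      exact ⟨i₀, hx, hi₀, fun j hj hPj => hmin j hPj hj⟩
    · rintro ⟨i, hx, hi, -⟩
      exact ⟨hx, i, hi⟩
  have hdisj : ((univ : Finset ι) : Set ι).PairwiseDisjoint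
      fun i => {x ∈ s | P i x ∧ ∀ j < i, ¬ P j x} := by
    intro i _ j _ hij
    refine disjoint_left.mpr fun x hxi hxj => ?_
    obtain ⟨-, hPi, hi⟩ := mem_filter.mp hxi
    obtain ⟨-, hPj, hj⟩ := mem_filter.mp hxj
    rcases hij.lt_or_gt with h | h
    exacts [hj i h hPi, hi j h hPj]
  rw [← card_biUnion hdisj, ← hunion, card_filter_add_card_filter_not]

end Finset

theorem phi_eq_card_filter {α : Type*} [DecidableEq α] (S : Finset α) (R : Set (Finset α))
    (p : List α → Prop) [DecidablePred p] (hp : ∀ l, p l ↔ ∀ Y ∈ R, ¬ l.HasPrefixSet Y) :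
    phi S R = #{l ∈ S.enumerations | p l} := by
  rw [phi, ← Nat.card_eq_finsetCard]
  exact Nat.card_congr (Equiv.subtypeEquivRight fun l => by
    rw [mem_filter, mem_enumerations, hp, and_assoc]; rfl)

theorem stmt0 {α : Type*} [DecidableEq α] (S : Finset α) (ℓ : ℕ) (X : Fin ℓ → Finset α)
    (hsub : ∀ i, X i ⊆ S) (hchain : ∀ i j : Fin ℓ, i < j → X i ⊂ X j) :
    phi S (Set.range X) =
      Nat.factorial S.card -
        ∑ i : Fin ℓ, Nat.factorial (S \ X i).card * phi (X i) {Y | ∃ j < i, Y = X j} := by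
  have hphi : phi S (Set.range X) = #{l ∈ S.enumerations | ∀ i, ¬ l.HasPrefixSet (X i)} :=
    phi_eq_card_filter _ _ _ fun l => by simp
  have hfirst (i : Fin ℓ) :
      #{l ∈ S.enumerations | l.HasPrefixSet (X i) ∧ ∀ j < i, ¬ l.HasPrefixSet (X j)} =
        (#(S \ X i)).factorial * phi (X i) {Y | ∃ j < i, Y = X j} := by
    rw [mul_comm, phi_eq_card_filter (X i) {Y | ∃ j < i, Y = X j}
      (fun p => ∀ j < i, ¬ p.HasPrefixSet (X j))
      fun p => ⟨by rintro h Y ⟨j, hj, rfl⟩; exact h j hj, fun h j hj => h _ ⟨j, hj, rfl⟩⟩,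
      ← card_filter_hasPrefixSet (hsub i)]
    congr 1
    refine filter_congr fun l _ => and_congr_right fun _ => forall₂_congr fun j hj => ?_
    rw [List.hasPrefixSet_take_iff (card_lt_card (hchain j i hj)).le]
  rw [hphi, ← card_enumerations, ← sum_congr rfl fun i _ => hfirst i]
  convert Nat.eq_sub_of_add_eq (card_eq_card_filter_forall_not_add_sum_card_filter_first
    S.enumerations fun i l => l.HasPrefixSet (X i)).symm
end

section
/- For every integer p ≥ 1, Σ_{i=1}^{p−1} 1/C(p,i) ≤ 4/p, where C(p,i) is the binomial coefficient. -/
lemma choose_mono_aux {p j i : ℕ} (hji : j ≤ i) (hi : i ≤ p / 2) :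
    p.choose j ≤ p.choose i := by
  induction i with
  | zero => simp [Nat.le_zero.mp hji]
  | succ k ih =>
    rcases Nat.lt_or_ge j (k + 1) with h | h
    · exact le_trans (ih (Nat.lt_succ_iff.mp h) (le_trans (Nat.le_succ k) hi))
        (Nat.choose_le_succ_of_lt_half_left (lt_of_lt_of_le (Nat.lt_succ_self k) hi))
    · have : j = k + 1 := le_antisymm hji h
      subst this; exact le_rfl

lemma choose_two_le {p i : ℕ} (h2 : 2 ≤ i) (hi : i ≤ p - 2) (hp : 4 ≤ p) :
    p.choose 2 ≤ p.choose i := by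
  rcases le_or_gt i (p / 2) with h | h
  · exact choose_mono_aux h2 h
  · have hip : i ≤ p := by omega
    rw [← Nat.choose_symm hip]
    exact choose_mono_aux (by omega) (by omega)

theorem stmt2 (p : ℕ) (hp : 1 ≤ p) :
    ∑ i ∈ Finset.Ico 1 p, (1 : ℚ) / (p.choose i) ≤ 4 / p := by
  rcases Nat.lt_or_ge p 5 with hp5 | hp5
  · interval_cases p <;> norm_num [Finset.sum_Ico_succ_top, Nat.choose]
  · obtain ⟨q, rfl⟩ : ∃ q, p = q + 1 := ⟨p - 1, by omega⟩
    have hq : 4 ≤ q := by omega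
    have hq0 : (0 : ℚ) < q := by exact_mod_cast Nat.pos_of_ne_zero (by omega)
    have hq4 : (4 : ℚ) ≤ q := by exact_mod_cast hq
    rw [Finset.sum_Ico_succ_top (by omega), Finset.sum_eq_sum_Ico_succ_bot (by omega : 1 < q)]
    have hc1 : ((q + 1).choose 1 : ℚ) = q + 1 := by norm_num
    have hcq : ((q + 1).choose q : ℚ) = q + 1 := by
      rw [← Nat.choose_symm (by omega : q ≤ q + 1)]
      norm_num
    have hmid : ∑ i ∈ Finset.Ico 2 q, (1 : ℚ) / ((q + 1).choose i)
        ≤ ∑ i ∈ Finset.Ico 2 q, (1 : ℚ) / ((q + 1).choose 2) := by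
      apply Finset.sum_le_sum
      intro i hi
      simp only [Finset.mem_Ico] at hi
      apply one_div_le_one_div_of_le
      · exact_mod_cast Nat.choose_pos (by omega : 2 ≤ q + 1)
      · exact_mod_cast choose_two_le hi.1 (by omega) (by omega)
    have hc2 : ((q + 1).choose 2 : ℚ) = (q + 1) * q / 2 := by
      rw [Nat.cast_choose_two]
      push_cast
      ring
    have hcard : ∑ i ∈ Finset.Ico 2 q, (1 : ℚ) / ((q + 1).choose 2)
        = ((q : ℚ) - 2) * (1 / ((q + 1) * q / 2)) := by
      rw [Finset.sum_const, Nat.card_Ico, nsmul_eq_mul, hc2]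
      congr 1
      push_cast [Nat.cast_sub (by omega : 2 ≤ q)]
      ring
    have key : (1 : ℚ) / (q + 1) + ((q : ℚ) - 2) * (1 / ((q + 1) * q / 2)) + 1 / (q + 1)
        ≤ 4 / ((q : ℚ) + 1) := by
      have h1 : (0 : ℚ) < (q : ℚ) + 1 := by linarith
      have e : 4 / ((q : ℚ) + 1) - (1 / ((q : ℚ) + 1) + ((q : ℚ) - 2) * (1 / ((q + 1) * q / 2))
          + 1 / (q + 1)) = 4 / (((q : ℚ) + 1) * q) := by
        field_simp
        ring
      have hpos : (0 : ℚ) < 4 / (((q : ℚ) + 1) * q) := by positivity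
      linarith
    calc (1 : ℚ) / ((q + 1).choose 1) + ∑ i ∈ Finset.Ico 2 q, (1 : ℚ) / ((q + 1).choose i)
          + 1 / ((q + 1).choose q)
        ≤ 1 / ((q : ℚ) + 1) + ((q : ℚ) - 2) * (1 / ((q + 1) * q / 2)) + 1 / (q + 1) := by
          rw [hc1, hcq]
          gcongr
          rw [← hcard]
          exact hmid
      _ ≤ 4 / ((q : ℚ) + 1) := key
      _ = 4 / (((q + 1 : ℕ)) : ℚ) := by push_cast; ring
end

section
/- Let ρ(p) be defined by the recurrence ρ(1) = 1 and ρ(p) = p! − Σ_{i=1}^{p−1} i! · ρ(p − i). Then for all p ≥ 1, ρ(p)/p! ≥ 1 − Σ_{i=1}^{p−1} 1/C(p,i); in particular ρ(p) ≥ p!/2 for all p ≥ 8. -/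
private lemma fac_half (p : ℕ) : ∀ i, 2 ≤ i → 2 * i ≤ p →
    Nat.factorial i * Nat.factorial (p - i) ≤ 2 * Nat.factorial (p - 2) := by
  intro i h2 hp
  induction i, h2 using Nat.le_induction with
  | base => simp [Nat.factorial]
  | succ n hn ih =>
    have hle : Nat.factorial n * Nat.factorial (p - n) ≤ 2 * Nat.factorial (p - 2) :=
      ih (by omega)
    have h3 : p - n = (p - (n + 1)) + 1 := by omega
    rw [h3, Nat.factorial_succ] at hle
    rw [Nat.factorial_succ]
    calc (n + 1) * Nat.factorial n * Nat.factorial (p - (n + 1))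
        ≤ ((p - (n + 1)) + 1) * Nat.factorial n * Nat.factorial (p - (n + 1)) := by
          gcongr; omega
      _ = Nat.factorial n * (((p - (n + 1)) + 1) * Nat.factorial (p - (n + 1))) := by ring
      _ ≤ 2 * Nat.factorial (p - 2) := hle

private lemma fac_bound (p i : ℕ) (h2 : 2 ≤ i) (hip : i ≤ p - 2) (hp : 4 ≤ p) :
    Nat.factorial i * Nat.factorial (p - i) ≤ 2 * Nat.factorial (p - 2) := by
  rcases le_or_gt (2 * i) p with h | h
  · exact fac_half p i h2 h
  · have h4 : 2 ≤ p - i := by omega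
    have h5 : 2 * (p - i) ≤ p := by omega
    have := fac_half p (p - i) h4 h5
    rwa [show p - (p - i) = i by omega, mul_comm] at this

private lemma sum_fac_le (p : ℕ) (hp : 8 ≤ p) :
    2 * ∑ i ∈ Finset.Ico 1 p, Nat.factorial i * Nat.factorial (p - i) ≤ Nat.factorial p := by
  obtain ⟨r, rfl⟩ : ∃ r, p = r + 8 := ⟨p - 8, by omega⟩
  rw [Finset.sum_eq_sum_Ico_succ_bot (by omega : 1 < r + 8)]
  rw [show r + 8 = (r + 7) + 1 from rfl,
    Finset.sum_Ico_succ_top (by omega : 2 ≤ r + 7)]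
  have hmid : ∑ i ∈ Finset.Ico 2 (r + 7), Nat.factorial i * Nat.factorial (r + 8 - i)
      ≤ (r + 5) * (2 * Nat.factorial (r + 6)) := by
    have := Finset.sum_le_card_nsmul (Finset.Ico 2 (r + 7))
      (fun i => Nat.factorial i * Nat.factorial (r + 8 - i))
      (2 * Nat.factorial (r + 6)) ?_
    · simpa [Nat.card_Ico, smul_eq_mul, show r + 7 - 2 = r + 5 by omega,
        show r + 8 - 2 = r + 6 by omega] using this
    · intro i hi
      simp only [Finset.mem_Ico] at hi
      have := fac_bound (r + 8) i hi.1 (by omega) (by omega)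
      simpa [show r + 8 - 2 = r + 6 by omega] using this
  have e1 : Nat.factorial 1 * Nat.factorial (r + 8 - 1) = Nat.factorial (r + 7) := by
    simp [Nat.factorial, show r + 8 - 1 = r + 7 by omega]
  have e2 : Nat.factorial (r + 7) * Nat.factorial (r + 8 - (r + 7)) = Nat.factorial (r + 7) := by
    simp [show r + 8 - (r + 7) = 1 by omega, Nat.factorial]
  rw [e1, e2]
  have f1 : Nat.factorial (r + 7) = (r + 7) * Nat.factorial (r + 6) := Nat.factorial_succ _
  have f2 : Nat.factorial (r + 8) = (r + 8) * ((r + 7) * Nat.factorial (r + 6)) := by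
    rw [Nat.factorial_succ, Nat.factorial_succ]
  rw [f1, f2]
  nlinarith [hmid, Nat.factorial_pos (r + 6)]

theorem stmt3 (ρ : ℕ → ℕ) (h1 : ρ 1 = 1)
    (hrec : ∀ p, 1 ≤ p → (ρ p : ℤ) =
      (Nat.factorial p : ℤ) - ∑ i ∈ Finset.Ico 1 p, (Nat.factorial i : ℤ) * ρ (p - i)) :
    (∀ p, 1 ≤ p →
      (1 : ℚ) - ∑ i ∈ Finset.Ico 1 p, (1 : ℚ) / (p.choose i) ≤ (ρ p : ℚ) / Nat.factorial p) ∧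
    ∀ p, 8 ≤ p → (Nat.factorial p : ℚ) / 2 ≤ (ρ p : ℚ) := by
  -- ρ p ≤ p!
  have hA : ∀ p, 1 ≤ p → (ρ p : ℤ) ≤ Nat.factorial p := by
    intro p hp
    rw [hrec p hp]
    have : (0 : ℤ) ≤ ∑ i ∈ Finset.Ico 1 p, (Nat.factorial i : ℤ) * ρ (p - i) :=
      Finset.sum_nonneg fun i _ => by positivity
    linarith
  have part1 : ∀ p, 1 ≤ p →
      (1 : ℚ) - ∑ i ∈ Finset.Ico 1 p, (1 : ℚ) / (p.choose i) ≤ (ρ p : ℚ) / Nat.factorial p := by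
    intro p hp
    have hfpos : (0 : ℚ) < Nat.factorial p := by
      exact_mod_cast Nat.factorial_pos p
    have hQ : (ρ p : ℚ) = (Nat.factorial p : ℚ)
        - ∑ i ∈ Finset.Ico 1 p, (Nat.factorial i : ℚ) * ρ (p - i) := by
      exact_mod_cast hrec p hp
    rw [hQ, sub_div, div_self hfpos.ne']
    have : (∑ i ∈ Finset.Ico 1 p, (Nat.factorial i : ℚ) * ρ (p - i)) / Nat.factorial p
        ≤ ∑ i ∈ Finset.Ico 1 p, (1 : ℚ) / (p.choose i) := by
      rw [Finset.sum_div]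
      apply Finset.sum_le_sum
      intro i hi
      simp only [Finset.mem_Ico] at hi
      have hip : i ≤ p := le_of_lt hi.2
      have hC : p.choose i * Nat.factorial i * Nat.factorial (p - i) = Nat.factorial p :=
        Nat.choose_mul_factorial_mul_factorial hip
      have hCQ : (p.choose i : ℚ) * Nat.factorial i * Nat.factorial (p - i)
          = Nat.factorial p := by exact_mod_cast hC
      have hCpos : (0 : ℚ) < p.choose i := by exact_mod_cast Nat.choose_pos hip
      have hρ : (ρ (p - i) : ℚ) ≤ Nat.factorial (p - i) := by
        exact_mod_cast hA (p - i) (by omega)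
      rw [div_le_div_iff₀ hfpos hCpos]
      calc (Nat.factorial i : ℚ) * ρ (p - i) * p.choose i
          ≤ (Nat.factorial i : ℚ) * Nat.factorial (p - i) * p.choose i := by
            gcongr
        _ = 1 * Nat.factorial p := by rw [← hCQ]; ring
    linarith
  refine ⟨part1, fun p hp8 => ?_⟩
  have hp : 1 ≤ p := by omega
  have hfpos : (0 : ℚ) < Nat.factorial p := by exact_mod_cast Nat.factorial_pos p
  -- rewrite the sum via factorials
  have hsum_eq : ∑ i ∈ Finset.Ico 1 p, (1 : ℚ) / (p.choose i)
      = ((∑ i ∈ Finset.Ico 1 p, Nat.factorial i * Nat.factorial (p - i) : ℕ) : ℚ)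
        / Nat.factorial p := by
    push_cast
    rw [Finset.sum_div]
    apply Finset.sum_congr rfl
    intro i hi
    simp only [Finset.mem_Ico] at hi
    have hip : i ≤ p := le_of_lt hi.2
    have hC : p.choose i * Nat.factorial i * Nat.factorial (p - i) = Nat.factorial p :=
      Nat.choose_mul_factorial_mul_factorial hip
    have hCQ : (p.choose i : ℚ) * Nat.factorial i * Nat.factorial (p - i)
        = Nat.factorial p := by exact_mod_cast hC
    have hCpos : (0 : ℚ) < p.choose i := by exact_mod_cast Nat.choose_pos hip
    rw [div_eq_div_iff hCpos.ne' hfpos.ne']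
    rw [← hCQ]; ring
  have hN : 2 * ∑ i ∈ Finset.Ico 1 p, Nat.factorial i * Nat.factorial (p - i)
      ≤ Nat.factorial p := sum_fac_le p hp8
  have hNQ : ((∑ i ∈ Finset.Ico 1 p, Nat.factorial i * Nat.factorial (p - i) : ℕ) : ℚ) * 2
      ≤ Nat.factorial p := by
    have := (Nat.cast_le (α := ℚ)).mpr hN
    push_cast at this ⊢
    linarith
  have hhalf : ∑ i ∈ Finset.Ico 1 p, (1 : ℚ) / (p.choose i) ≤ 1 / 2 := by
    rw [hsum_eq, div_le_div_iff₀ hfpos (by norm_num : (0:ℚ) < 2)]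
    linarith
  have h := part1 p hp
  have h2 : (1 / 2 : ℚ) ≤ (ρ p : ℚ) / Nat.factorial p := by linarith
  rw [div_le_div_iff₀ (by norm_num : (0:ℚ) < 2) hfpos] at h2
  linarith
end

section
/- Let S be a finite set, R a collection of subsets of S, and X ∈ R a maximal element of R (with respect to inclusion). Then φ(S, R) = φ(S, R \ {X}) − |S \ X|! · φ(X, {Y ∈ R : Y ⊊ X}). -/
section

variable {α : Type*} [DecidableEq α]

lemma List.toFinset_take_mono (l : List α) {m n : ℕ} (h : m ≤ n) :
    (l.take m).toFinset ⊆ (l.take n).toFinset := fun x hx => by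
  rw [List.mem_toFinset] at hx ⊢
  exact List.take_subset_take_left l h hx

lemma List.length_eq_card_of_toFinset_eq {l : List α} {S : Finset α} (hl : l.Nodup)
    (hS : l.toFinset = S) : l.length = S.card := by
  rw [← hS, List.toFinset_card_of_nodup hl]

lemma Finset.mem_permutations_toList_iff {S : Finset α} {l : List α} :
    l ∈ S.toList.permutations ↔ l.Nodup ∧ l.toFinset = S := by
  rw [List.mem_permutations]
  constructor
  · intro h
    exact ⟨h.nodup_iff.mpr S.nodup_toList, by ext; simp [h.mem_iff]⟩
  · rintro ⟨hl, rfl⟩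
    exact (List.perm_ext_iff_of_nodup hl (Finset.nodup_toList _)).mpr (by simp)

lemma Finset.setOf_nodup_toFinset_eq (S : Finset α) :
    {l : List α | l.Nodup ∧ l.toFinset = S} = ↑S.toList.permutations.toFinset := by
  ext l
  rw [Finset.mem_coe, List.mem_toFinset, Finset.mem_permutations_toList_iff]
  rfl

lemma Finset.card_nodup_toFinset_eq (S : Finset α) :
    Nat.card {l : List α // l.Nodup ∧ l.toFinset = S} = S.card.factorial := by
  rw [← Set.coe_ofPred, Nat.card_coe_set_eq, Finset.setOf_nodup_toFinset_eq, Set.ncard_coe_finset,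
    List.toFinset_card_of_nodup (List.nodup_permutations _ S.nodup_toList),
    List.length_permutations, Finset.length_toList]

lemma List.toFinset_drop_eq_sdiff {l : List α} {S X : Finset α} (hl : l.Nodup)
    (hS : l.toFinset = S) (hX : (l.take X.card).toFinset = X) :
    (l.drop X.card).toFinset = S \ X := by
  have hdisj : _root_.Disjoint (l.take X.card).toFinset (l.drop X.card).toFinset := by
    rw [List.disjoint_toFinset_iff_disjoint]
    rw [← List.take_append_drop X.card l, List.nodup_append'] at hl
    exact hl.2.2
  rw [hX] at hdisj
  rw [← hS, ← List.take_append_drop X.card l, List.toFinset_append, List.take_append_drop, hX,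
    Finset.union_sdiff_cancel_left hdisj]

def prefixSplitEquiv {S X : Finset α} (hXS : X ⊆ S) (P : List α → Prop) :
    {l : List α // l.Nodup ∧ l.toFinset = S ∧ (l.take X.card).toFinset = X ∧ P (l.take X.card)} ≃
      {a : List α // a.Nodup ∧ a.toFinset = X ∧ P a} ×
        {b : List α // b.Nodup ∧ b.toFinset = S \ X} where
  toFun l :=
    (⟨l.1.take X.card, l.2.1.sublist (List.take_sublist _ _), l.2.2.2⟩,
     ⟨l.1.drop X.card, l.2.1.sublist (List.drop_sublist _ _),
      List.toFinset_drop_eq_sdiff l.2.1 l.2.2.1 l.2.2.2.1⟩)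
  invFun p := ⟨p.1.1 ++ p.2.1, by
    obtain ⟨⟨a, ha, haX, hPa⟩, ⟨b, hb, hbX⟩⟩ := p
    dsimp only
    have htake : (a ++ b).take X.card = a :=
      List.take_left' (List.length_eq_card_of_toFinset_eq ha haX)
    refine ⟨ha.append hb ?_, ?_, by rw [htake, haX], by rwa [htake]⟩
    · rw [← List.disjoint_toFinset_iff_disjoint, haX, hbX]
      exact Finset.disjoint_sdiff
    · rw [List.toFinset_append, haX, hbX, Finset.union_sdiff_of_subset hXS]⟩
  left_inv l := Subtype.ext (List.take_append_drop _ _)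
  right_inv := by
    rintro ⟨⟨a, ha, haX, hPa⟩, ⟨b, hb, hbX⟩⟩
    have hlen := List.length_eq_card_of_toFinset_eq ha haX
    exact Prod.ext (Subtype.ext (List.take_left' hlen)) (Subtype.ext (List.drop_left' hlen))

/-- Set prefixes of a list are nested, so a member of `R` that is a prefix of `l` is either inside
`X`, hence a prefix of `l.take X.card`, or strictly contains `X`. -/
lemma List.avoids_iff_take_avoids {l : List α} {X : Finset α} {R : Set (Finset α)}
    (hX : (l.take X.card).toFinset = X) (hmax : ∀ Y ∈ R, ¬ X ⊂ Y) :
    (∀ Y ∈ R, (l.take Y.card).toFinset ≠ Y) ↔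
      ∀ Y ∈ {Y ∈ R | Y ⊆ X}, ((l.take X.card).take Y.card).toFinset ≠ Y := by
  constructor
  · rintro h Y ⟨hYR, hYX⟩
    rw [List.take_take, min_eq_left (Finset.card_le_card hYX)]
    exact h Y hYR
  · intro h Y hYR hY
    rcases le_or_gt Y.card X.card with hle | hlt
    · have hYX : Y ⊆ X := calc
        Y = (l.take Y.card).toFinset := hY.symm
        _ ⊆ (l.take X.card).toFinset := l.toFinset_take_mono hle
        _ = X := hX
      refine h Y ⟨hYR, hYX⟩ ?_
      rwa [List.take_take, min_eq_left hle]
    · have hXY : X ⊆ Y := calc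
        X = (l.take X.card).toFinset := hX.symm
        _ ⊆ (l.take Y.card).toFinset := l.toFinset_take_mono hlt.le
        _ = Y := hY
      exact hmax Y hYR (lt_of_le_of_ne hXY (by rintro rfl; exact lt_irrefl _ hlt))

def prefixFreePerms (S : Finset α) (R : Set (Finset α)) : Set (List α) :=
  {l | l.Nodup ∧ l.toFinset = S ∧ ∀ Y ∈ R, (l.take Y.card).toFinset ≠ Y}

lemma phi_eq_ncard (S : Finset α) (R : Set (Finset α)) :
    phi S R = (prefixFreePerms S R).ncard :=
  Nat.card_coe_set_eq _

lemma finite_prefixFreePerms (S : Finset α) (R : Set (Finset α)) :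
    (prefixFreePerms S R).Finite :=
  (S.toList.permutations.toFinset.finite_toSet).subset fun _ hl =>
    S.setOf_nodup_toFinset_eq ▸ ⟨hl.1, hl.2.1⟩

lemma phi_eq_phi_insert_add (S X : Finset α) (R : Set (Finset α)) :
    phi S R = phi S (insert X R) +
      (prefixFreePerms S R ∩ {l | (l.take X.card).toFinset = X}).ncard := by
  have hdiff : prefixFreePerms S R \ {l | (l.take X.card).toFinset = X} =
      prefixFreePerms S (insert X R) := by
    ext l
    simp only [prefixFreePerms, Set.mem_sdiff, Set.mem_ofPred_eq, Set.forall_mem_insert]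
    tauto
  rw [phi_eq_ncard, phi_eq_ncard, ← hdiff, add_comm,
    Set.ncard_inter_add_ncard_sdiff_eq_ncard _ _ (finite_prefixFreePerms S R)]

lemma ncard_prefixFreePerms_inter_prefix {S X : Finset α} {R : Set (Finset α)} (hXS : X ⊆ S)
    (hmax : ∀ Y ∈ R, ¬ X ⊂ Y) :
    (prefixFreePerms S R ∩ {l | (l.take X.card).toFinset = X}).ncard =
      (S \ X).card.factorial * phi X {Y ∈ R | Y ⊆ X} := by
  have hset : prefixFreePerms S R ∩ {l | (l.take X.card).toFinset = X} =
      {l | l.Nodup ∧ l.toFinset = S ∧ (l.take X.card).toFinset = X ∧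
        ∀ Y ∈ {Y ∈ R | Y ⊆ X}, ((l.take X.card).take Y.card).toFinset ≠ Y} := by
    ext l
    simp only [prefixFreePerms, Set.mem_inter_iff, Set.mem_ofPred_eq]
    constructor
    · rintro ⟨⟨hnd, hS, hR⟩, hX⟩
      exact ⟨hnd, hS, hX, (List.avoids_iff_take_avoids hX hmax).mp hR⟩
    · rintro ⟨hnd, hS, hX, hR⟩
      exact ⟨⟨hnd, hS, (List.avoids_iff_take_avoids hX hmax).mpr hR⟩, hX⟩
  rw [hset, ← Nat.card_coe_set_eq, Set.coe_ofPred, Nat.card_congr (prefixSplitEquiv hXS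
    fun a => ∀ Y ∈ {Y ∈ R | Y ⊆ X}, (a.take Y.card).toFinset ≠ Y), Nat.card_prod,
    Finset.card_nodup_toFinset_eq, mul_comm]
  rfl

end

theorem stmt4 {α : Type*} [DecidableEq α] (S : Finset α) (R : Finset (Finset α))
    (hR : ∀ Y ∈ R, Y ⊂ S) (X : Finset α) (hX : X ∈ R)
    (hmax : ∀ Y ∈ R, ¬ X ⊂ Y) :
    phi S ↑R = phi S ↑(R.erase X) -
      Nat.factorial (S \ X).card * phi X {Y | Y ∈ R ∧ Y ⊂ X} := by
  have hsplit := phi_eq_phi_insert_add S X ↑(R.erase X)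
  rw [Finset.coe_erase, Set.insert_sdiff_singleton, Set.insert_eq_of_mem (Finset.mem_coe.mpr hX),
    ← Finset.coe_erase, ncard_prefixFreePerms_inter_prefix (hR X hX).subset
      fun Y hY => hmax Y (Finset.mem_of_mem_erase hY)] at hsplit
  have hfamily : {Y ∈ (↑(R.erase X) : Set (Finset α)) | Y ⊆ X} = {Y | Y ∈ R ∧ Y ⊂ X} := by
    ext Y
    simp only [Finset.coe_erase, Set.mem_ofPred_eq, Set.mem_sdiff, Finset.mem_coe,
      Set.mem_singleton_iff, Finset.ssubset_iff_subset_ne]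
    tauto
  rw [hfamily] at hsplit
  omega
end

section
/- A linear ordering τ of the vertices of a connected undirected chordal graph G is a topological ordering of an acyclic orientation of G with no induced subgraph a → b ← c (i.e., an acyclic moral orientation) if and only if the reverse of τ is a perfect elimination ordering of G. -/
/-- `f` is an orientation of the simple graph `G`: each edge gets exactly one direction. -/
def IsOrientation {V : Type*} (G : SimpleGraph V) (f : V → V → Prop) : Prop :=
  (∀ u v, G.Adj u v ↔ (f u v ∨ f v u)) ∧ ∀ u v, f u v → ¬ f v u

/-- A relation is acyclic if it has no directed cycle. -/
def IsAcyclicRel {V : Type*} (f : V → V → Prop) : Prop :=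
  ∀ v, ¬ Relation.TransGen f v v

/-- An orientation is moral if it contains no v-structure `a → b ← c`
with `a` and `c` nonadjacent. -/
def IsMoral {V : Type*} (G : SimpleGraph V) (f : V → V → Prop) : Prop :=
  ∀ a b c, f a b → f c b → a ≠ c → G.Adj a c

/-- An acyclic moral orientation (AMO) of `G`. -/
def IsAMO {V : Type*} (G : SimpleGraph V) (f : V → V → Prop) : Prop :=
  IsOrientation G f ∧ IsAcyclicRel f ∧ IsMoral G f

/-- A list enumerating all vertices exactly once (a linear ordering of the vertices). -/
def IsVertexList {V : Type*} (l : List V) : Prop :=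
  l.Nodup ∧ ∀ v : V, v ∈ l

/-- `l` is a topological ordering of the orientation `f`:
every arc goes from an earlier to a later vertex in `l`. -/
def IsTopOrd {V : Type*} [DecidableEq V] (f : V → V → Prop) (l : List V) : Prop :=
  IsVertexList l ∧ ∀ u v, f u v → l.idxOf u < l.idxOf v

/-- `G` is chordal: every cycle of length at least 4 has a chord, i.e. an edge of `G`
between two vertices of the cycle that is not an edge of the cycle. -/
def IsChordal {V : Type*} (G : SimpleGraph V) : Prop :=
  ∀ (v : V) (c : G.Walk v v), c.IsCycle → 4 ≤ c.length →
    ∃ u w, u ∈ c.support ∧ w ∈ c.support ∧ G.Adj u w ∧ s(u, w) ∉ c.edges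

/-- `l` is a perfect elimination ordering of `G`: for each vertex `a`, the neighbors of
`a` coming later in `l` form a clique. -/
def IsPEO {V : Type*} [DecidableEq V] (G : SimpleGraph V) (l : List V) : Prop :=
  IsVertexList l ∧ ∀ a b c, G.Adj a b → G.Adj a c → b ≠ c →
    l.idxOf a < l.idxOf b → l.idxOf a < l.idxOf c → G.Adj b c

/-- The finset `K` is a maximal clique of `G`. -/
def IsMaxClique {V : Type*} (G : SimpleGraph V) (K : Finset V) : Prop :=
  G.IsClique ↑K ∧ ∀ K' : Finset V, G.IsClique ↑K' → K ⊆ K' → K = K'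

/-- `S` is an `a`-`b`-separator in `G`: `a, b ∉ S` and every walk from `a` to `b` meets `S`. -/
def IsSeparator {V : Type*} (G : SimpleGraph V) (a b : V) (S : Finset V) : Prop :=
  a ∉ S ∧ b ∉ S ∧ ∀ p : G.Walk a b, ∃ v ∈ p.support, v ∈ S

/-- `S` is a minimal separator of `G`: it is an inclusion-minimal `a`-`b`-separator
for some pair of distinct nonadjacent vertices `a`, `b`. -/
def IsMinimalSeparator {V : Type*} (G : SimpleGraph V) (S : Finset V) : Prop :=
  ∃ a b, a ≠ b ∧ ¬ G.Adj a b ∧ IsSeparator G a b S ∧ ∀ S' ⊂ S, ¬ IsSeparator G a b S'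

/-- The orientation of `G` induced by the linear ordering `l`: each edge is oriented
from the earlier to the later endpoint. -/
def orientFromList {V : Type*} [DecidableEq V] (G : SimpleGraph V) (l : List V)
    (u v : V) : Prop :=
  G.Adj u v ∧ l.idxOf u < l.idxOf v


lemma rev_indexOf {V : Type*} [DecidableEq V] {l : List V} (h : l.Nodup) {v : V}
    (hv : v ∈ l) : l.reverse.idxOf v = l.length - 1 - l.idxOf v := by
  set i := l.idxOf v with hi
  have hil : i < l.length := List.idxOf_lt_length_iff.2 hv
  have hj : l.length - 1 - i < l.reverse.length := by
    rw [List.length_reverse]; omega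
  have hv' : l.reverse[l.length - 1 - i] = v := by
    rw [List.getElem_reverse]
    have heq : ∀ m (hm : m < l.length), m = i → l[m]'hm = v := by
      rintro m hm rfl; exact List.getElem_idxOf hil
    exact heq _ _ (by omega)
  calc l.reverse.idxOf v = l.reverse.idxOf (l.reverse[l.length - 1 - i]) := by rw [hv']
    _ = l.length - 1 - i := (List.nodup_reverse.2 h).idxOf_getElem _ hj

lemma rev_lt_iff {V : Type*} [DecidableEq V] {l : List V} (h : l.Nodup) {a b : V}
    (ha : a ∈ l) (hb : b ∈ l) :
    l.reverse.idxOf a < l.reverse.idxOf b ↔ l.idxOf b < l.idxOf a := by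
  rw [rev_indexOf h ha, rev_indexOf h hb]
  have h1 : l.idxOf a < l.length := List.idxOf_lt_length_iff.2 ha
  have h2 : l.idxOf b < l.length := List.idxOf_lt_length_iff.2 hb
  omega

theorem stmt5 {V : Type*} [Fintype V] [DecidableEq V] (G : SimpleGraph V)
    (hconn : G.Connected) (hchord : IsChordal G)
    (τ : List V) (hτ : IsVertexList τ) :
    IsAMO G (orientFromList G τ) ↔ IsPEO G τ.reverse := by
  obtain ⟨hnd, hmem⟩ := hτ
  have hne : ∀ u v : V, G.Adj u v → τ.idxOf u ≠ τ.idxOf v := by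
    intro u v huv heq
    apply huv.ne
    have h1 : τ.idxOf u < τ.length := List.idxOf_lt_length_iff.2 (hmem u)
    calc u = τ[τ.idxOf u] := (List.getElem_idxOf h1).symm
      _ = τ[τ.idxOf v]'(heq ▸ h1) := by congr 1
      _ = v := List.getElem_idxOf (heq ▸ h1)
  constructor
  · rintro ⟨-, -, hmor⟩
    refine ⟨⟨List.nodup_reverse.2 hnd, fun v => List.mem_reverse.2 (hmem v)⟩, ?_⟩
    intro a b c hab hac hbc h1 h2
    rw [rev_lt_iff hnd (hmem a) (hmem b)] at h1
    rw [rev_lt_iff hnd (hmem a) (hmem c)] at h2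
    exact hmor b a c ⟨hab.symm, h1⟩ ⟨hac.symm, h2⟩ hbc
  · rintro ⟨-, hpeo⟩
    refine ⟨⟨?_, ?_⟩, ?_, ?_⟩
    · intro u v
      constructor
      · intro h
        rcases lt_or_gt_of_ne (hne u v h) with h' | h'
        · exact Or.inl ⟨h, h'⟩
        · exact Or.inr ⟨h.symm, h'⟩
      · rintro (⟨h, -⟩ | ⟨h, -⟩); exact h; exact h.symm
    · rintro u v ⟨-, h1⟩ ⟨-, h2⟩; omega
    · intro v hv
      have : ∀ u w : V, Relation.TransGen (orientFromList G τ) u w →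
          τ.idxOf u < τ.idxOf w := by
        intro u w h
        induction h with
        | single h => exact h.2
        | tail _ h ih => exact ih.trans h.2
      exact absurd (this v v hv) (lt_irrefl _)
    · rintro a b c ⟨hab, h1⟩ ⟨hcb, h2⟩ hac
      refine hpeo b a c hab.symm hcb.symm hac ?_ ?_
      · exact (rev_lt_iff hnd (hmem b) (hmem a)).2 h1
      · exact (rev_lt_iff hnd (hmem b) (hmem c)).2 h2
end

section
/- Every acyclic moral orientation of a connected undirected graph G has exactly one source vertex (a vertex with no incoming edges). -/
theorem stmt7 {V : Type*} [Fintype V] [DecidableEq V] (G : SimpleGraph V)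
    (hconn : G.Connected) (f : V → V → Prop) (hf : IsAMO G f) :
    ∃! s : V, ∀ u : V, ¬ f u s := by
  obtain ⟨⟨hor, hasym⟩, hac, hmor⟩ := hf
  -- Key lemma: if s is a source and s reaches u, then any in-neighbor w of u
  -- is either s itself or reachable from s.
  have L : ∀ s : V, (∀ u, ¬ f u s) → ∀ u, Relation.TransGen f s u →
      ∀ w, f w u → w = s ∨ Relation.TransGen f s w := by
    intro s hs u hu
    induction hu with
    | single h =>
      intro w hw
      by_cases hws : w = s
      · exact Or.inl hws
      · have hadj := hmor w _ s hw h hws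
        rcases (hor w s).mp hadj with h1 | h2
        · exact absurd h1 (hs w)
        · exact Or.inr (Relation.TransGen.single h2)
    | @tail b c hsb hbc ih =>
      intro w hw
      by_cases hwb : w = b
      · exact Or.inr (hwb ▸ hsb)
      · have hadj := hmor w _ b hw hbc hwb
        rcases (hor w b).mp hadj with h1 | h2
        · exact ih w h1
        · exact Or.inr (hsb.tail h2)
  -- Main claim: if s is a source, every vertex with a walk to s is s or reachable from s.
  have M : ∀ (v s : V), G.Walk v s → (∀ u, ¬ f u s) →
      v = s ∨ Relation.TransGen f s v := by
    intro v s p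
    induction p with
    | nil => exact fun _ => Or.inl rfl
    | @cons a b c hab _ ih =>
      intro hs
      rcases (hor a b).mp hab with h1 | h2
      · rcases ih hs with rfl | hb
        · exact absurd h1 (hs a)
        · exact L c hs b hb a h1
      · rcases ih hs with rfl | hb
        · exact Or.inr (Relation.TransGen.single h2)
        · exact Or.inr (hb.tail h2)
  -- Existence of a source via well-foundedness of the transitive closure.
  haveI : Nonempty V := hconn.nonempty
  haveI : IsTrans V (Relation.TransGen f) := inferInstance
  haveI : IsIrrefl V (Relation.TransGen f) := ⟨hac⟩
  have hwf : WellFounded (Relation.TransGen f) :=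
    Finite.wellFounded_of_trans_of_irrefl _
  obtain ⟨s, -, hmin⟩ := hwf.has_min Set.univ ⟨Classical.arbitrary V, trivial⟩
  have hs : ∀ u, ¬ f u s := fun u h =>
    hmin u trivial (Relation.TransGen.single h)
  refine ⟨s, hs, ?_⟩
  intro t ht
  obtain ⟨p⟩ := hconn.preconnected t s
  rcases M t s p hs with rfl | htr
  · rfl
  · obtain ⟨u, -, hu⟩ := Relation.TransGen.tail'_iff.mp htr
    exact absurd hu (ht u)
end

section
/- Every acyclic moral orientation α of a connected undirected chordal graph G can be represented by a topological ordering of α whose initial segment is a maximal clique of G. -/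
section AuxStmt8

variable {V : Type*} [Fintype V] [DecidableEq V]

private lemma transGen_wf_stmt8 {f : V → V → Prop} (hacyc : IsAcyclicRel f) :
    WellFounded (Relation.TransGen f) := by
  haveI : IsTrans V (Relation.TransGen f) := ⟨fun _ _ _ => Relation.TransGen.trans⟩
  haveI : IsIrrefl V (Relation.TransGen f) := ⟨hacyc⟩
  exact Finite.wellFounded_of_trans_of_irrefl _

private lemma toposort_stmt8 {f : V → V → Prop} (hacyc : IsAcyclicRel f) (s : Finset V) :
    ∃ l : List V, l.Nodup ∧ (∀ x, x ∈ l ↔ x ∈ s) ∧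
      ∀ u v, f u v → u ∈ s → v ∈ s → l.idxOf u < l.idxOf v := by
  induction s using Finset.strongInduction with
  | _ s ih =>
    rcases s.eq_empty_or_nonempty with rfl | hne
    · exact ⟨[], List.nodup_nil, by simp, fun u v _ hu => absurd hu (by simp)⟩
    · obtain ⟨x, hxs, hmin⟩ := (transGen_wf_stmt8 hacyc).has_min ↑s (Finset.coe_nonempty.2 hne)
      obtain ⟨l, hnd, hmem, hord⟩ := ih (s.erase x) (Finset.erase_ssubset hxs)
      have hxl : x ∉ l := fun h => (Finset.mem_erase.1 ((hmem x).1 h)).1 rfl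
      refine ⟨x :: l, List.nodup_cons.2 ⟨hxl, hnd⟩, ?_, ?_⟩
      · intro y
        simp only [List.mem_cons, hmem, Finset.mem_erase]
        constructor
        · rintro (rfl | ⟨_, hy⟩)
          · exact hxs
          · exact hy
        · intro hy
          rcases eq_or_ne y x with rfl | hyx
          · exact Or.inl rfl
          · exact Or.inr ⟨hyx, hy⟩
      · intro u v huv hu hv
        have hvx : v ≠ x := fun h => hmin u hu (Relation.TransGen.single (h ▸ huv))
        rcases eq_or_ne u x with rfl | hux
        · rw [List.idxOf_cons_self, List.idxOf_cons_ne _ (Ne.symm hvx)]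
          exact Nat.succ_pos _
        · rw [List.idxOf_cons_ne _ (Ne.symm hux), List.idxOf_cons_ne _ (Ne.symm hvx)]
          exact Nat.succ_lt_succ (hord u v huv (Finset.mem_erase.2 ⟨hux, hu⟩)
            (Finset.mem_erase.2 ⟨hvx, hv⟩))

private lemma exists_good_clique_stmt8 (G : SimpleGraph V) {f : V → V → Prop} (hf : IsAMO G f) :
    ∃ M : Finset V, IsMaxClique G M ∧ ∀ x ∈ M, ∀ u, f u x → u ∈ M := by
  obtain ⟨hor, hacyc, hmor⟩ := hf
  obtain ⟨M, hMGood, hMmax⟩ := Set.Finite.exists_maximalFor id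
    {A : Finset V | G.IsClique ↑A ∧ ∀ x ∈ A, ∀ u, f u x → u ∈ A}
    (Set.toFinite _) ⟨∅, by simp⟩
  simp only [Set.mem_setOf_eq] at hMGood
  refine ⟨M, ⟨hMGood.1, ?_⟩, hMGood.2⟩
  intro K' hK' hsub
  by_contra hne
  obtain ⟨w, hwK', hwM⟩ := Finset.exists_of_ssubset
    (Finset.ssubset_def.2 ⟨hsub, fun h => hne (Finset.Subset.antisymm hsub h)⟩)
  have hadjw : ∀ m ∈ M, G.Adj w m := fun m hm =>
    hK' (Finset.mem_coe.2 hwK') (Finset.mem_coe.2 (hsub hm)) (fun h => hwM (h ▸ hm))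
  obtain ⟨u, ⟨huM, huw⟩, humin⟩ := (transGen_wf_stmt8 hacyc).has_min
    {x | x ∉ M ∧ Relation.ReflTransGen f x w} ⟨w, hwM, Relation.ReflTransGen.refl⟩
  have hpred : ∀ p, f p u → p ∈ M := by
    intro p hp
    by_contra hpM
    exact humin p ⟨hpM, Relation.ReflTransGen.head hp huw⟩ (Relation.TransGen.single hp)
  have hnotall : ¬ ∀ m ∈ M, G.Adj u m := by
    intro hall
    have hGood' : G.IsClique ↑(insert u M) ∧ ∀ x ∈ insert u M, ∀ p, f p x → p ∈ insert u M := by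
      constructor
      · rw [Finset.coe_insert]
        exact hMGood.1.insert (fun m hm _ => hall m hm)
      · intro x hx p hp
        rcases Finset.mem_insert.1 hx with rfl | hx
        · exact Finset.mem_insert_of_mem (hpred p hp)
        · exact Finset.mem_insert_of_mem (hMGood.2 x hx p hp)
    have heq : insert u M = M :=
      Finset.Subset.antisymm (hMmax hGood' (Finset.subset_insert u M)) (Finset.subset_insert u M)
    exact huM (heq ▸ Finset.mem_insert_self u M)
  push_neg at hnotall
  obtain ⟨k, hkM, hkadj⟩ := hnotall
  have key : ∀ y, Relation.ReflTransGen f u y → ¬ G.Adj y k ∧ y ∉ M := by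
    intro y hy
    induction hy with
    | refl => exact ⟨hkadj, huM⟩
    | @tail b c hxy hstep ih =>
      have hcM : c ∉ M := fun hc => ih.2 (hMGood.2 c hc b hstep)
      refine ⟨?_, hcM⟩
      intro hadj
      rcases (hor.1 c k).1 hadj with hck | hkc
      · exact hcM (hMGood.2 k hkM c hck)
      · have hbk : b ≠ k := fun h => ih.2 (h ▸ hkM)
        exact ih.1 (hmor b c k hstep hkc hbk)
  exact (key w huw).1 (hadjw k hkM)

private lemma acyclic_extend_stmt8 {f : V → V → Prop} {M : Finset V} (hacyc : IsAcyclicRel f)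
    (hcl : ∀ x ∈ M, ∀ u, f u x → u ∈ M) :
    IsAcyclicRel (fun a b => f a b ∨ (a ∈ M ∧ b ∉ M)) := by
  have key : ∀ a b, Relation.TransGen (fun a b => f a b ∨ (a ∈ M ∧ b ∉ M)) a b →
      (b ∈ M → a ∈ M) ∧ ((a ∈ M ↔ b ∈ M) → Relation.TransGen f a b) := by
    intro a b h
    induction h with
    | single h' =>
      rcases h' with h' | ⟨haM, hbM⟩
      · exact ⟨fun hb => hcl _ hb _ h', fun _ => Relation.TransGen.single h'⟩
      · exact ⟨fun hb => absurd hb hbM, fun hiff => absurd (hiff.1 haM) hbM⟩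
    | @tail b c htg hstep ih =>
      have hstep1 : c ∈ M → b ∈ M := by
        rcases hstep with h' | ⟨_, hcM⟩
        · exact fun hc => hcl _ hc _ h'
        · exact fun hc => absurd hc hcM
      refine ⟨fun hc => ih.1 (hstep1 hc), ?_⟩
      intro hiff
      by_cases hcM : c ∈ M
      · have hbM : b ∈ M := hstep1 hcM
        have haM : a ∈ M := hiff.2 hcM
        have hbc : f b c := by
          rcases hstep with h' | ⟨_, h⟩
          · exact h'
          · exact absurd hcM h
        exact (ih.2 (iff_of_true haM hbM)).tail hbc
      · have haM : a ∉ M := fun ha => hcM (hiff.1 ha)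
        have hbM : b ∉ M := fun hb => haM (ih.1 hb)
        have hbc : f b c := by
          rcases hstep with h' | ⟨h, _⟩
          · exact h'
          · exact absurd h hbM
        exact (ih.2 (iff_of_false haM hbM)).tail hbc
  exact fun v hv => hacyc v ((key v v hv).2 Iff.rfl)

end AuxStmt8

theorem stmt8 {V : Type*} [Fintype V] [DecidableEq V] (G : SimpleGraph V)
    (hconn : G.Connected) (hchord : IsChordal G)
    (f : V → V → Prop) (hf : IsAMO G f) :
    ∃ (τ : List V) (K : Finset V), IsTopOrd f τ ∧ IsMaxClique G K ∧
      (τ.take K.card).toFinset = K := by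
  obtain ⟨M, hMmax, hMcl⟩ := exists_good_clique_stmt8 G hf
  obtain ⟨hor, hacyc, hmor⟩ := hf
  have hacyc' := acyclic_extend_stmt8 hacyc hMcl
  obtain ⟨l, hnd, hmem, hord⟩ := toposort_stmt8 hacyc' Finset.univ
  have hall : ∀ v : V, v ∈ l := fun v => (hmem v).2 (Finset.mem_univ v)
  have hordf : ∀ u v, f u v → l.idxOf u < l.idxOf v :=
    fun u v h => hord u v (Or.inl h) (Finset.mem_univ _) (Finset.mem_univ _)
  have hsep : ∀ m ∈ M, ∀ x, x ∉ M → l.idxOf m < l.idxOf x :=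
    fun m hm x hx => hord m x (Or.inr ⟨hm, hx⟩) (Finset.mem_univ _) (Finset.mem_univ _)
  refine ⟨l, M, ⟨⟨hnd, hall⟩, hordf⟩, hMmax, ?_⟩
  have hinj : ∀ a b : V, l.idxOf a = l.idxOf b → a = b := by
    intro a b h
    have ha : l.idxOf a < l.length := List.idxOf_lt_length_iff.2 (hall a)
    have hb : l.idxOf b < l.length := List.idxOf_lt_length_iff.2 (hall b)
    rw [← List.getElem_idxOf ha, ← List.getElem_idxOf hb]
    congr 1
  have hMlt : ∀ m ∈ M, l.idxOf m < M.card := by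
    intro m hm
    have hjlen : l.idxOf m < l.length := List.idxOf_lt_length_iff.2 (hall m)
    have hsub : ∀ x ∈ l.take (l.idxOf m + 1), x ∈ M := by
      intro x hx
      rw [List.mem_take_iff_getElem] at hx
      obtain ⟨i, hi, rfl⟩ := hx
      by_contra hxM
      have h2 := hsep m hm _ hxM
      rw [List.Nodup.idxOf_getElem hnd] at h2
      omega
    have hnd' : (l.take (l.idxOf m + 1)).Nodup := hnd.sublist (List.take_sublist _ _)
    have hc : l.idxOf m + 1 ≤ M.card := by
      calc l.idxOf m + 1 = (l.take (l.idxOf m + 1)).toFinset.card := by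
            rw [List.toFinset_card_of_nodup hnd', List.length_take]; omega
        _ ≤ M.card := Finset.card_le_card (fun x hx => hsub x (List.mem_toFinset.1 hx))
    omega
  have himg : (M.image l.idxOf).card = M.card :=
    Finset.card_image_of_injOn (fun a _ b _ h => hinj a b h)
  have htakeM : ∀ x ∈ l.take M.card, x ∈ M := by
    intro x hx
    rw [List.mem_take_iff_getElem] at hx
    obtain ⟨i, hi, rfl⟩ := hx
    by_contra hxM
    have hidx : l.idxOf l[i] = i := List.Nodup.idxOf_getElem hnd _ _
    have hsub2 : M.image l.idxOf ⊆ Finset.range i := by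
      intro j hjmem
      obtain ⟨m, hm, rfl⟩ := Finset.mem_image.1 hjmem
      have h2 := hsep m hm _ hxM
      rw [hidx] at h2
      exact Finset.mem_range.2 h2
    have h3 := Finset.card_le_card hsub2
    rw [himg, Finset.card_range] at h3
    omega
  ext x
  simp only [List.mem_toFinset]
  constructor
  · exact htakeM x
  · intro hx
    rw [List.mem_take_iff_getElem]
    have hlt : l.idxOf x < l.length := List.idxOf_lt_length_iff.2 (hall x)
    have hlt2 := hMlt x hx
    exact ⟨l.idxOf x, by omega, List.getElem_idxOf hlt⟩
end

section
/- Let α be an acyclic moral orientation of a connected chordal graph G, and let τ_1, τ_2 be two topological orderings of α each of which begins with a maximal clique of G. Then τ_1 and τ_2 have a common prefix S which is either a maximal clique of G or a minimal vertex separator of G. -/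
section Stmt9Aux

variable {V : Type*} [DecidableEq V]

lemma stmt9_mem_take_iff (l : List V) (x : V) (hx : x ∈ l) (n : ℕ) :
    x ∈ l.take n ↔ l.idxOf x < n := by
  constructor
  · intro h
    have h1 : l.idxOf x = (l.take n).idxOf x := by
      conv_lhs => rw [← List.take_append_drop n l]
      exact List.idxOf_append_of_mem h
    have h2 := List.idxOf_lt_length_iff.2 h
    have h3 : (l.take n).length ≤ n := by simp
    omega
  · intro h
    have hlt : l.idxOf x < l.length := List.idxOf_lt_length_iff.2 hx
    have key : (l.take n)[l.idxOf x]'(by simp; omega) = l[l.idxOf x] := by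
      rw [List.getElem_take]
    rw [List.getElem_idxOf hlt] at key
    exact key ▸ List.getElem_mem _

lemma stmt9_length_eq [Fintype V] {l : List V} (hnd : l.Nodup) (hmem : ∀ v, v ∈ l) :
    l.length = Fintype.card V := by
  have huniv : l.toFinset = Finset.univ := Finset.eq_univ_iff_forall.2
    (fun v => List.mem_toFinset.2 (hmem v))
  rw [← List.toFinset_card_of_nodup hnd, huniv, Finset.card_univ]

lemma stmt9_prefix [Fintype V] {G : SimpleGraph V} {f : V → V → Prop}
    (hor : IsOrientation G f) {l m : List V} (hl : IsTopOrd f l) (hm : IsTopOrd f m)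
    {K L : Finset V} (hKc : G.IsClique ↑K)
    (hpK : (l.take K.card).toFinset = K) (hpL : (m.take L.card).toFinset = L) :
    (l.take (K ∩ L).card).toFinset = K ∩ L := by
  obtain ⟨⟨hlnd, hlmem⟩, hlord⟩ := hl
  obtain ⟨⟨hmnd, hmmem⟩, hmord⟩ := hm
  set S := K ∩ L with hSdef
  have hSK : S ⊆ K := Finset.inter_subset_left
  have hsK : S.card ≤ K.card := Finset.card_le_card hSK
  have hsl : S.card ≤ l.length := by
    rw [stmt9_length_eq hlnd hlmem]
    exact Finset.card_le_univ S
  have hkey : ∀ y ∈ S, ∀ x, x ∈ K → x ∉ S → l.idxOf y < l.idxOf x := by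
    intro y hy x hxK hxS
    have hyK : y ∈ K := hSK hy
    have hyL : y ∈ L := (Finset.mem_inter.1 hy).2
    have hxL : x ∉ L := fun h => hxS (Finset.mem_inter.2 ⟨hxK, h⟩)
    have hne : y ≠ x := fun h => hxS (h ▸ hy)
    have hadj : G.Adj y x := hKc (Finset.mem_coe.2 hyK) (Finset.mem_coe.2 hxK) hne
    rcases (hor.1 y x).1 hadj with hfyx | hfxy
    · exact hlord _ _ hfyx
    · exfalso
      have h1 : m.idxOf x < m.idxOf y := hmord _ _ hfxy
      have h2 : m.idxOf y < L.card := by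
        have hmem2 : y ∈ m.take L.card := List.mem_toFinset.1 (by rw [hpL]; exact hyL)
        exact (stmt9_mem_take_iff m y (hmmem y) L.card).1 hmem2
      have h3 : L.card ≤ m.idxOf x := by
        by_contra h
        push_neg at h
        have : x ∈ m.take L.card := (stmt9_mem_take_iff m x (hmmem x) L.card).2 h
        exact hxL (by rw [← hpL]; exact List.mem_toFinset.2 this)
      omega
  have hsub : (l.take S.card).toFinset ⊆ S := by
    intro x hx
    have hx' : x ∈ l.take S.card := List.mem_toFinset.1 hx
    have hxidx : l.idxOf x < S.card := (stmt9_mem_take_iff l x (hlmem x) S.card).1 hx'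
    have hxK : x ∈ K := by
      rw [← hpK]
      exact List.mem_toFinset.2 ((stmt9_mem_take_iff l x (hlmem x) K.card).2 (lt_of_lt_of_le hxidx hsK))
    by_contra hxS
    have hinj : Set.InjOn (fun y => l.idxOf y) ↑S := fun y hy z hz h =>
      (List.idxOf_inj (hlmem y)).1 h
    have himg : S.image (fun y => l.idxOf y) ⊆ Finset.range (l.idxOf x) := by
      intro i hi
      obtain ⟨y, hy, rfl⟩ := Finset.mem_image.1 hi
      exact Finset.mem_range.2 (hkey y hy x hxK hxS)
    have hcard : S.card ≤ l.idxOf x := by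
      calc S.card = (S.image (fun y => l.idxOf y)).card := (Finset.card_image_of_injOn hinj).symm
        _ ≤ (Finset.range (l.idxOf x)).card := Finset.card_le_card himg
        _ = l.idxOf x := Finset.card_range _
    omega
  have hcard : S.card ≤ (l.take S.card).toFinset.card := by
    have hnd : (l.take S.card).Nodup := (List.take_sublist _ _).nodup hlnd
    rw [List.toFinset_card_of_nodup hnd, List.length_take]
    omega
  exact Finset.eq_of_subset_of_card_le hsub hcard

end Stmt9Aux

theorem stmt9 {V : Type*} [Fintype V] [DecidableEq V] (G : SimpleGraph V)
    (hconn : G.Connected) (hchord : IsChordal G)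
    (f : V → V → Prop) (hf : IsAMO G f)
    (τ₁ τ₂ : List V) (K₁ K₂ : Finset V)
    (h₁ : IsTopOrd f τ₁) (hK₁ : IsMaxClique G K₁) (hp₁ : (τ₁.take K₁.card).toFinset = K₁)
    (h₂ : IsTopOrd f τ₂) (hK₂ : IsMaxClique G K₂) (hp₂ : (τ₂.take K₂.card).toFinset = K₂) :
    ∃ S : Finset V, (IsMinimalSeparator G S ∨ IsMaxClique G S) ∧
      (τ₁.take S.card).toFinset = S ∧ (τ₂.take S.card).toFinset = S := by
  obtain ⟨hor, hacyc, hmoral⟩ := hf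
  by_cases hKK : K₁ = K₂
  · refine ⟨K₁, Or.inr hK₁, hp₁, ?_⟩
    rw [hKK]; exact hp₂
  · obtain ⟨⟨h1nd, h1mem⟩, h1ord⟩ := id h₁
    obtain ⟨⟨h2nd, h2mem⟩, h2ord⟩ := id h₂
    set S := K₁ ∩ K₂ with hSdef
    have hS₁ : (τ₁.take S.card).toFinset = S := stmt9_prefix hor h₁ h₂ hK₁.1 hp₁ hp₂
    have hS₂ : (τ₂.take S.card).toFinset = S := by
      have h := stmt9_prefix hor h₂ h₁ hK₂.1 hp₂ hp₁
      rwa [Finset.inter_comm K₂ K₁] at h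
    have hne₁ : S ≠ K₁ := by
      intro h
      refine hKK (hK₁.2 K₂ hK₂.1 (fun x hx => ?_))
      rw [← h] at hx
      exact (Finset.mem_inter.1 hx).2
    have hne₂ : S ≠ K₂ := by
      intro h
      refine hKK ((hK₂.2 K₁ hK₁.1 (fun x hx => ?_)).symm)
      rw [← h] at hx
      exact (Finset.mem_inter.1 hx).1
    have hcard₁ : S.card < K₁.card :=
      Finset.card_lt_card (Finset.ssubset_iff_subset_ne.mpr ⟨Finset.inter_subset_left, hne₁⟩)
    have hcard₂ : S.card < K₂.card :=
      Finset.card_lt_card (Finset.ssubset_iff_subset_ne.mpr ⟨Finset.inter_subset_right, hne₂⟩)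
    have hlen₁ : τ₁.length = Fintype.card V := stmt9_length_eq h1nd h1mem
    have hlen₂ : τ₂.length = Fintype.card V := stmt9_length_eq h2nd h2mem
    have hK₁card : K₁.card ≤ Fintype.card V := Finset.card_le_univ K₁
    have hK₂card : K₂.card ≤ Fintype.card V := Finset.card_le_univ K₂
    have hsl₁ : S.card < τ₁.length := by omega
    have hsl₂ : S.card < τ₂.length := by omega
    obtain ⟨a, hadef⟩ : ∃ a : V, a = τ₁[S.card]'hsl₁ := ⟨_, rfl⟩
    obtain ⟨b, hbdef⟩ : ∃ b : V, b = τ₂[S.card]'hsl₂ := ⟨_, rfl⟩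
    have hidxa : τ₁.idxOf a = S.card := by
      rw [hadef]; exact List.Nodup.idxOf_getElem h1nd S.card hsl₁
    have hidxb : τ₂.idxOf b = S.card := by
      rw [hbdef]; exact List.Nodup.idxOf_getElem h2nd S.card hsl₂
    have haK₁ : a ∈ K₁ := by
      rw [← hp₁]
      exact List.mem_toFinset.2 ((stmt9_mem_take_iff τ₁ a (h1mem a) K₁.card).2 (by omega))
    have hbK₂ : b ∈ K₂ := by
      rw [← hp₂]
      exact List.mem_toFinset.2 ((stmt9_mem_take_iff τ₂ b (h2mem b) K₂.card).2 (by omega))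
    have haS : a ∉ S := by
      intro h
      have : a ∈ τ₁.take S.card := List.mem_toFinset.1 (by rw [hS₁]; exact h)
      have := (stmt9_mem_take_iff τ₁ a (h1mem a) S.card).1 this
      omega
    have hbS : b ∉ S := by
      intro h
      have : b ∈ τ₂.take S.card := List.mem_toFinset.1 (by rw [hS₂]; exact h)
      have := (stmt9_mem_take_iff τ₂ b (h2mem b) S.card).1 this
      omega
    have hpa : ∀ u, f u a → u ∈ S := by
      intro u hu
      have h1 : τ₁.idxOf u < S.card := by have := h1ord u a hu; omega
      rw [← hS₁]
      exact List.mem_toFinset.2 ((stmt9_mem_take_iff τ₁ u (h1mem u) S.card).2 h1)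
    have hpb : ∀ u, f u b → u ∈ S := by
      intro u hu
      have h1 : τ₂.idxOf u < S.card := by have := h2ord u b hu; omega
      rw [← hS₂]
      exact List.mem_toFinset.2 ((stmt9_mem_take_iff τ₂ u (h2mem u) S.card).2 h1)
    have hab : a ≠ b := by
      intro h
      exact haS (Finset.mem_inter.2 ⟨haK₁, h ▸ hbK₂⟩)
    have hnadj : ¬ G.Adj a b := by
      intro h
      rcases (hor.1 a b).1 h with hfab | hfba
      · have h1 : τ₂.idxOf a < S.card := by have := h2ord a b hfab; omega
        refine haS ?_
        rw [← hS₂]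
        exact List.mem_toFinset.2 ((stmt9_mem_take_iff τ₂ a (h2mem a) S.card).2 h1)
      · have h1 : τ₁.idxOf b < S.card := by have := h1ord b a hfba; omega
        refine hbS ?_
        rw [← hS₁]
        exact List.mem_toFinset.2 ((stmt9_mem_take_iff τ₁ b (h1mem b) S.card).2 h1)
    have hstrict : ∀ u w : V, u ≠ w → τ₁.idxOf u ≤ τ₁.idxOf w → τ₁.idxOf u < τ₁.idxOf w :=
      fun u w hne hle => lt_of_le_of_ne hle (fun h => hne ((List.idxOf_inj (h1mem u)).1 h))
    have fdir : ∀ u w : V, G.Adj w u → τ₁.idxOf u < τ₁.idxOf w → f u w := by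
      intro u w hadj hlt
      rcases (hor.1 w u).1 hadj with h | h
      · exact absurd (h1ord _ _ h) (by omega)
      · exact h
    have key : ∀ n (p : G.Walk a b), p.length = n → ∃ v ∈ p.support, v ∈ S := by
      intro n
      induction n using Nat.strong_induction_on with
      | _ n ih =>
        intro p hpl
        by_contra hcon
        push_neg at hcon
        obtain ⟨w, hwmem, hwmax⟩ := Finset.exists_max_image p.support.toFinset
          (fun v => τ₁.idxOf v) ⟨a, List.mem_toFinset.2 p.start_mem_support⟩
        rw [List.mem_toFinset] at hwmem
        have hwmax' : ∀ v ∈ p.support, τ₁.idxOf v ≤ τ₁.idxOf w := fun v hv =>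
          hwmax v (List.mem_toFinset.2 hv)
        by_cases hwa : w = a
        · subst hwa
          cases p with
          | nil => exact hab rfl
          | cons hadj q =>
            rename_i u
            have humem : u ∈ (SimpleGraph.Walk.cons hadj q).support := by
              rw [SimpleGraph.Walk.support_cons]
              exact List.mem_cons_of_mem _ q.start_mem_support
            have hlt : τ₁.idxOf u < τ₁.idxOf w := hstrict u w hadj.ne' (hwmax' u humem)
            exact hcon u humem (hpa u (fdir u w hadj hlt))
        · by_cases hwb : w = b
          · subst hwb
            cases hq : p.reverse with
            | nil => exact hab rfl
            | cons hadj q' =>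
              rename_i u
              have humem : u ∈ p.support := by
                have h1 : u ∈ p.reverse.support := by
                  rw [hq, SimpleGraph.Walk.support_cons]
                  exact List.mem_cons_of_mem _ q'.start_mem_support
                rwa [SimpleGraph.Walk.support_reverse, List.mem_reverse] at h1
              have hlt : τ₁.idxOf u < τ₁.idxOf w := hstrict u w hadj.ne' (hwmax' u humem)
              exact hcon u humem (hpb u (fdir u w hadj hlt))
          · have hqr := p.take_spec hwmem
            have hlp : (p.takeUntil w hwmem).length + (p.dropUntil w hwmem).length = p.length := by
              have h := congrArg SimpleGraph.Walk.length hqr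
              rwa [SimpleGraph.Walk.length_append] at h
            cases hr : p.dropUntil w hwmem with
            | nil => exact hwb rfl
            | cons hadjr r' =>
              rename_i v
              cases hq2 : (p.takeUntil w hwmem).reverse with
              | nil => exact hwa rfl
              | cons hadjq q'' =>
                rename_i u
                have hvmem : v ∈ p.support := by
                  apply p.support_dropUntil_subset hwmem
                  rw [hr, SimpleGraph.Walk.support_cons]
                  exact List.mem_cons_of_mem _ r'.start_mem_support
                have humem : u ∈ p.support := by
                  apply p.support_takeUntil_subset hwmem
                  have h1 : u ∈ (p.takeUntil w hwmem).reverse.support := by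
                    rw [hq2, SimpleGraph.Walk.support_cons]
                    exact List.mem_cons_of_mem _ q''.start_mem_support
                  rwa [SimpleGraph.Walk.support_reverse, List.mem_reverse] at h1
                have hfv : f v w := fdir v w hadjr (hstrict v w hadjr.ne' (hwmax' v hvmem))
                have hfu : f u w := fdir u w hadjq (hstrict u w hadjq.ne' (hwmax' u humem))
                have hlq : (p.takeUntil w hwmem).length = q''.length + 1 := by
                  have h := congrArg SimpleGraph.Walk.length hq2
                  rw [SimpleGraph.Walk.length_reverse, SimpleGraph.Walk.length_cons] at h
                  omega
                have hlr : (p.dropUntil w hwmem).length = r'.length + 1 := by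
                  rw [hr, SimpleGraph.Walk.length_cons]
                have hxsupp : ∀ x, x ∈ q''.support → x ∈ p.support := by
                  intro x hx
                  apply p.support_takeUntil_subset hwmem
                  have h1 : x ∈ (p.takeUntil w hwmem).reverse.support := by
                    rw [hq2, SimpleGraph.Walk.support_cons]
                    exact List.mem_cons_of_mem _ hx
                  rwa [SimpleGraph.Walk.support_reverse, List.mem_reverse] at h1
                have hxsupp' : ∀ x, x ∈ r'.support → x ∈ p.support := by
                  intro x hx
                  apply p.support_dropUntil_subset hwmem
                  rw [hr, SimpleGraph.Walk.support_cons]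
                  exact List.mem_cons_of_mem _ hx
                by_cases huv : u = v
                · subst huv
                  have hlt' : (q''.reverse.append r').length < n := by
                    rw [SimpleGraph.Walk.length_append, SimpleGraph.Walk.length_reverse]
                    omega
                  obtain ⟨x, hx, hxS⟩ := ih _ hlt' (q''.reverse.append r') rfl
                  rw [SimpleGraph.Walk.support_append] at hx
                  rcases List.mem_append.1 hx with hx1 | hx2
                  · rw [SimpleGraph.Walk.support_reverse, List.mem_reverse] at hx1
                    exact hcon x (hxsupp x hx1) hxS
                  · exact hcon x (hxsupp' x (List.mem_of_mem_tail hx2)) hxS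
                · have hadjuv : G.Adj u v := hmoral u w v hfu hfv huv
                  have hlt' : (q''.reverse.append (SimpleGraph.Walk.cons hadjuv r')).length < n := by
                    rw [SimpleGraph.Walk.length_append, SimpleGraph.Walk.length_reverse,
                      SimpleGraph.Walk.length_cons]
                    omega
                  obtain ⟨x, hx, hxS⟩ := ih _ hlt'
                    (q''.reverse.append (SimpleGraph.Walk.cons hadjuv r')) rfl
                  rw [SimpleGraph.Walk.support_append] at hx
                  rcases List.mem_append.1 hx with hx1 | hx2
                  · rw [SimpleGraph.Walk.support_reverse, List.mem_reverse] at hx1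
                    exact hcon x (hxsupp x hx1) hxS
                  · rw [SimpleGraph.Walk.support_cons, List.tail_cons] at hx2
                    exact hcon x (hxsupp' x hx2) hxS
    have hsep : IsSeparator G a b S := ⟨haS, hbS, fun p => key p.length p rfl⟩
    have hmin : ∀ S' ⊂ S, ¬ IsSeparator G a b S' := by
      intro S' hS' hsep'
      obtain ⟨haS', hbS', hhit⟩ := hsep'
      obtain ⟨s', hs'S, hs'S'⟩ := Finset.exists_of_ssubset hS'
      have hs'K₁ : s' ∈ K₁ := (Finset.mem_inter.1 hs'S).1
      have hs'K₂ : s' ∈ K₂ := (Finset.mem_inter.1 hs'S).2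
      have hadjas : G.Adj a s' := hK₁.1 (Finset.mem_coe.2 haK₁) (Finset.mem_coe.2 hs'K₁)
        (fun h => haS (h ▸ hs'S))
      have hadjsb : G.Adj s' b := hK₂.1 (Finset.mem_coe.2 hs'K₂) (Finset.mem_coe.2 hbK₂)
        (fun h => hbS (h ▸ hs'S))
      obtain ⟨x, hx, hxS'⟩ := hhit (SimpleGraph.Walk.cons hadjas (SimpleGraph.Walk.cons hadjsb SimpleGraph.Walk.nil))
      simp only [SimpleGraph.Walk.support_cons, SimpleGraph.Walk.support_nil,
        List.mem_cons, List.mem_singleton] at hx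
      rcases hx with rfl | rfl | rfl | h
      · exact haS' hxS'
      · exact hs'S' hxS'
      · exact hbS' hxS'
      · exact absurd h List.not_mem_nil
    exact ⟨S, Or.inl ⟨a, b, hab, hnadj, hsep, hmin⟩, hS₁, hS₂⟩
end

section
/- If K_1 and K_2 are two distinct maximal cliques of a connected chordal graph G that each appear as the starting clique of some topological ordering of the same acyclic moral orientation α, then S = K_1 ∩ K_2 is nonempty and is a minimal separator of G separating K_1 \ S from K_2 \ S. -/
lemma mem_take_iff_of_list {V : Type*} [DecidableEq V] {l : List V} (hnd : l.Nodup)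
    (hmem : ∀ v : V, v ∈ l) (v : V) (n : ℕ) :
    v ∈ l.take n ↔ l.idxOf v < n := by
  have hv : l.idxOf v < l.length := List.idxOf_lt_length_iff.2 (hmem v)
  constructor
  · intro h
    obtain ⟨i, hi, hiv⟩ := List.mem_take_iff_getElem.1 h
    have h2 : i < l.length := lt_of_lt_of_le hi inf_le_right
    have heq : l[i] = l[l.idxOf v] := by rw [hiv, List.getElem_idxOf]
    have := (hnd.getElem_inj_iff).1 heq
    have := lt_inf_iff.1 hi
    omega
  · intro h
    exact List.mem_take_iff_getElem.2 ⟨l.idxOf v, lt_inf_iff.2 ⟨h, hv⟩, List.getElem_idxOf hv⟩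

lemma scanGen {V : Type*} {G : SimpleGraph V} {f : V → V → Prop}
    (hor : IsOrientation G f) (hmor : IsMoral G f)
    (T : Finset V) (hT : ∀ u v, f u v → u ∉ T → v ∈ T → False) (A : V → Prop) :
    ∀ n (v₀ v₁ b : V) (q : G.Walk v₁ b), q.length = n → f v₀ v₁ → A v₀ → v₀ ∉ T →
      (∀ v ∈ q.support, A v) → b ∈ T →
      ∃ w : G.Walk v₀ b, w.length ≤ n ∧ ∀ v ∈ w.support, A v := by
  intro n
  induction n with
  | zero =>
    intro v₀ v₁ b q hq hf01 hA0 hT0 hAq hb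
    cases q with
    | nil => exact (hT _ _ hf01 hT0 hb).elim
    | cons h q' => simp [SimpleGraph.Walk.length_cons] at hq
  | succ n ih =>
    intro v₀ v₁ b q hq hf01 hA0 hT0 hAq hb
    cases q with
    | nil => simp at hq
    | @cons _ v₂ _ h q' =>
      simp only [SimpleGraph.Walk.length_cons, Nat.succ_eq_add_one, add_left_inj] at hq
      have hv1T : v₁ ∉ T := fun hmem => hT _ _ hf01 hT0 hmem
      have hAv1 : A v₁ := hAq v₁ (by simp)
      have hAq' : ∀ v ∈ q'.support, A v := fun v hv => hAq v (by simp [hv])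
      rcases (hor.1 v₁ v₂).1 h with h12 | h21
      · obtain ⟨w', hw'len, hw'A⟩ := ih v₁ v₂ b q' hq h12 hAv1 hv1T hAq' hb
        refine ⟨SimpleGraph.Walk.cons ((hor.1 v₀ v₁).2 (Or.inl hf01)) w', ?_, ?_⟩
        · simp only [SimpleGraph.Walk.length_cons]; omega
        · intro v hv
          simp only [SimpleGraph.Walk.support_cons, List.mem_cons] at hv
          rcases hv with rfl | hv
          · exact hA0
          · exact hw'A v hv
      · by_cases hve : v₀ = v₂
        · refine ⟨q'.copy hve.symm rfl, ?_, ?_⟩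
          · simp [hq]
          · intro v hv
            rw [SimpleGraph.Walk.support_copy] at hv
            exact hAq' v hv
        · have hadj : G.Adj v₀ v₂ := hmor v₀ v₁ v₂ hf01 h21 hve
          refine ⟨SimpleGraph.Walk.cons hadj q', ?_, ?_⟩
          · simp only [SimpleGraph.Walk.length_cons]; omega
          · intro v hv
            simp only [SimpleGraph.Walk.support_cons, List.mem_cons] at hv
            rcases hv with rfl | hv
            · exact hA0
            · exact hAq' v hv

lemma mem_clique_iff {V : Type*} [DecidableEq V] {τ : List V} {K : Finset V}
    (hτ : IsVertexList τ) (hp : (τ.take K.card).toFinset = K) (v : V) :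
    v ∈ K ↔ τ.idxOf v < K.card := by
  conv_lhs => rw [← hp]
  rw [List.mem_toFinset, mem_take_iff_of_list hτ.1 hτ.2]

lemma no_enter {V : Type*} [DecidableEq V] {f : V → V → Prop}
    {τ : List V} {K : Finset V} (hτ : IsTopOrd f τ) (hp : (τ.take K.card).toFinset = K) :
    ∀ u v, f u v → u ∉ K → v ∈ K → False := by
  intro u v hfuv hu hv
  have h1 := (mem_clique_iff hτ.1 hp v).1 hv
  have h2 := hτ.2 u v hfuv
  exact hu ((mem_clique_iff hτ.1 hp u).2 (by omega))

lemma maxclique_nonempty {V : Type*} {G : SimpleGraph V} {K : Finset V}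
    (hK : IsMaxClique G K) (v : V) : K.Nonempty := by
  rcases Finset.eq_empty_or_nonempty K with h | h
  · subst h
    have := hK.2 {v} (by simp) (Finset.empty_subset _)
    exact absurd this.symm (Finset.singleton_ne_empty v)
  · exact h

theorem stmt10 {V : Type*} [Fintype V] [DecidableEq V] (G : SimpleGraph V)
    (hconn : G.Connected) (hchord : IsChordal G)
    (f : V → V → Prop) (hf : IsAMO G f)
    (τ₁ τ₂ : List V) (K₁ K₂ : Finset V)
    (h₁ : IsTopOrd f τ₁) (hK₁ : IsMaxClique G K₁) (hp₁ : (τ₁.take K₁.card).toFinset = K₁)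
    (h₂ : IsTopOrd f τ₂) (hK₂ : IsMaxClique G K₂) (hp₂ : (τ₂.take K₂.card).toFinset = K₂)
    (hne : K₁ ≠ K₂) :
    (K₁ ∩ K₂).Nonempty ∧ IsMinimalSeparator G (K₁ ∩ K₂) ∧
      ∀ a b : V, a ∈ K₁ → a ∉ K₁ ∩ K₂ → b ∈ K₂ → b ∉ K₁ ∩ K₂ →
        ∀ p : G.Walk a b, ∃ v ∈ p.support, v ∈ K₁ ∩ K₂ := by
  
  have hor := hf.1
  have hmor := hf.2.2
  have noEnter₁ := no_enter h₁ hp₁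
  have noEnter₂ := no_enter h₂ hp₂
  -- the separation property
  have sep : ∀ a b : V, a ∈ K₁ → a ∉ K₁ ∩ K₂ → b ∈ K₂ → b ∉ K₁ ∩ K₂ →
      ∀ p : G.Walk a b, ∃ v ∈ p.support, v ∈ K₁ ∩ K₂ := by
    have key : ∀ n (a b : V) (p : G.Walk a b), p.length = n → a ∈ K₁ → b ∈ K₂ →
        (∀ v ∈ p.support, v ∉ K₁ ∩ K₂) → False := by
      intro n
      induction n using Nat.strong_induction_on with
      | _ n ih =>
        intro a b p hlen haK hbK hav
        have haS : a ∉ K₁ ∩ K₂ := hav a p.start_mem_support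
        have haK2 : a ∉ K₂ := fun h => haS (Finset.mem_inter.2 ⟨haK, h⟩)
        cases p with
        | nil => exact haK2 hbK
        | @cons _ v₁ _ h p' =>
          simp only [SimpleGraph.Walk.length_cons] at hlen
          by_cases hv1K1 : v₁ ∈ K₁
          · exact ih p'.length (by omega) v₁ b p' rfl hv1K1 hbK
              (fun v hv => hav v (by simp [hv]))
          · have hfav : f a v₁ := ((hor.1 a v₁).1 h).resolve_right
              (fun hf' => noEnter₁ v₁ a hf' hv1K1 haK)
            obtain ⟨w, hwlen, hwav⟩ := scanGen hor hmor K₂ noEnter₂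
              (fun v => v ∉ K₁ ∩ K₂) p'.length a v₁ b p' rfl hfav haS haK2
              (fun v hv => hav v (by simp [hv])) hbK
            exact ih w.length (by omega) a b w rfl haK hbK hwav
    intro a b ha haS hb hbS p
    by_contra hcon
    push_neg at hcon
    exact key p.length a b p rfl ha hb hcon
  -- nonemptiness: the unique source lies in both cliques
  have hnonempty : (K₁ ∩ K₂).Nonempty := by
    obtain ⟨v0⟩ := hconn.nonempty
    obtain ⟨x, t₁, rfl⟩ := List.exists_cons_of_ne_nil (List.ne_nil_of_mem (h₁.1.2 v0))
    obtain ⟨y, t₂, rfl⟩ := List.exists_cons_of_ne_nil (List.ne_nil_of_mem (h₂.1.2 v0))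
    have hsrc₁ : ∀ u, ¬ f u x := by
      intro u hfu
      have := h₁.2 u x hfu
      simp [List.idxOf_cons_self] at this
    have hsrc₂ : ∀ u, ¬ f u y := by
      intro u hfu
      have := h₂.2 u y hfu
      simp [List.idxOf_cons_self] at this
    have hxK₁ : x ∈ K₁ := by
      rw [mem_clique_iff h₁.1 hp₁, List.idxOf_cons_self]
      exact Finset.card_pos.2 (maxclique_nonempty hK₁ v0)
    have hyK₂ : y ∈ K₂ := by
      rw [mem_clique_iff h₂.1 hp₂, List.idxOf_cons_self]
      exact Finset.card_pos.2 (maxclique_nonempty hK₂ v0)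
    have hxy : x = y := by
      by_contra hxy
      have key2 : ∀ n (p : G.Walk x y), p.length = n → False := by
        intro n
        induction n using Nat.strong_induction_on with
        | _ n ih =>
          intro p hp
          cases p with
          | nil => exact hxy rfl
          | @cons _ v₁ _ h p' =>
            simp only [SimpleGraph.Walk.length_cons] at hp
            have hfxv : f x v₁ := ((hor.1 x v₁).1 h).resolve_right (hsrc₁ v₁)
            obtain ⟨w, hwlen, -⟩ := scanGen hor hmor {y}
              (fun u v hfuv _ hv => hsrc₂ u (Finset.mem_singleton.1 hv ▸ hfuv))
              (fun _ => True) p'.length x v₁ y p' rfl hfxv trivial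
              (by simp [hxy]) (fun _ _ => trivial) (by simp)
            exact ih w.length (by omega) w rfl
      obtain ⟨p⟩ := hconn.preconnected x y
      exact key2 p.length p rfl
    exact ⟨x, Finset.mem_inter.2 ⟨hxK₁, hxy ▸ hyK₂⟩⟩
  -- pick witnesses a ∈ K₁ \ K₂, b ∈ K₂ \ K₁
  obtain ⟨a, haK1, haK2⟩ : ∃ a, a ∈ K₁ ∧ a ∉ K₂ := by
    by_contra hc
    push_neg at hc
    exact hne (hK₁.2 K₂ hK₂.1 (fun x hx => hc x hx))
  obtain ⟨b, hbK2, hbK1⟩ : ∃ b, b ∈ K₂ ∧ b ∉ K₁ := by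
    by_contra hc
    push_neg at hc
    exact hne (hK₂.2 K₁ hK₁.1 (fun x hx => hc x hx)).symm
  have haS : a ∉ K₁ ∩ K₂ := fun h => haK2 (Finset.mem_inter.1 h).2
  have hbS : b ∉ K₁ ∩ K₂ := fun h => hbK1 (Finset.mem_inter.1 h).1
  have hab : a ≠ b := fun h => haK2 (h ▸ hbK2)
  have hnadj : ¬ G.Adj a b := by
    intro hadj
    obtain ⟨v, hv, hvS⟩ := sep a b haK1 haS hbK2 hbS
      (SimpleGraph.Walk.cons hadj SimpleGraph.Walk.nil)
    simp only [SimpleGraph.Walk.support_cons, SimpleGraph.Walk.support_nil,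
      List.mem_cons, List.mem_singleton] at hv
    rcases hv with rfl | rfl | h
    · exact haS hvS
    · exact hbS hvS
    · exact absurd h List.not_mem_nil
  refine ⟨hnonempty, ⟨a, b, hab, hnadj, ⟨haS, hbS, fun p => sep a b haK1 haS hbK2 hbS p⟩, ?_⟩,
    sep⟩
  intro S' hss hsep
  obtain ⟨x, hxS, hxS'⟩ := Finset.exists_of_ssubset hss
  have hxK1 : x ∈ K₁ := (Finset.mem_inter.1 hxS).1
  have hxK2 : x ∈ K₂ := (Finset.mem_inter.1 hxS).2
  have hax : G.Adj a x := hK₁.1 haK1 hxK1 (fun h => haK2 (h ▸ hxK2))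
  have hxb : G.Adj x b := hK₂.1 hxK2 hbK2 (fun h => hbK1 (h ▸ hxK1))
  obtain ⟨ha', hb', hall⟩ := hsep
  obtain ⟨v, hv, hvS'⟩ := hall
    (SimpleGraph.Walk.cons hax (SimpleGraph.Walk.cons hxb SimpleGraph.Walk.nil))
  simp only [SimpleGraph.Walk.support_cons, SimpleGraph.Walk.support_nil,
    List.mem_cons, List.mem_singleton] at hv
  rcases hv with rfl | rfl | rfl | h
  · exact ha' hvS'
  · exact hxS' hvS'
  · exact hb' hvS'
  · exact absurd h List.not_mem_nil
end

section
/- Let G be a connected undirected chordal graph, K a clique of G, and π, π' two permutations of K. Then the union over all AMOs of G representable by a topological ordering beginning with π equals, after removing the edges internal to K, the union over all AMOs representable by a topological ordering beginning with π'. In particular, the undirected connected components of the complement of K in these union graphs coincide. -/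
/-- Arc of the union graph `G^{π(K)}`: `u → v` appears in some AMO of `G` representable
by a topological ordering beginning with the list `π`. -/
def UnionArcPerm {V : Type*} [DecidableEq V] (G : SimpleGraph V) (π : List V)
    (u v : V) : Prop :=
  ∃ (f : V → V → Prop) (τ : List V), IsAMO G f ∧ IsTopOrd f τ ∧
    τ.take π.length = π ∧ f u v

/-- Two vertices are connected in the undirected part of `G^{π(K)}` restricted
to `V \ K`. -/
def UnionUndirReach {V : Type*} [DecidableEq V] (G : SimpleGraph V) (K : Finset V)
    (π : List V) (u v : V) : Prop :=
  Relation.ReflTransGen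
    (fun a b => a ∉ K ∧ b ∉ K ∧ UnionArcPerm G π a b ∧ UnionArcPerm G π b a) u v

section Aux
variable {V : Type*} [Fintype V] [DecidableEq V]

/-- Main transfer lemma: an arc of the union graph for prefix `π` with not both
endpoints in `K` is also an arc for prefix `π'`. -/
theorem unionArcPerm_transfer (G : SimpleGraph V) (K : Finset V) (hK : G.IsClique ↑K)
    (π π' : List V) (hπ : π.Nodup ∧ π.toFinset = K) (hπ' : π'.Nodup ∧ π'.toFinset = K)
    {u v : V} (huv : ¬(u ∈ K ∧ v ∈ K)) (h : UnionArcPerm G π u v) :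
    UnionArcPerm G π' u v := by
  obtain ⟨f, τ, ⟨hor, hac, hmor⟩, ⟨⟨hnd, hall⟩, htop⟩, htake, hfuv⟩ := h
  have hmemπ : ∀ x : V, x ∈ π ↔ x ∈ K := by
    intro x; rw [← hπ.2, List.mem_toFinset]
  have hmemπ' : ∀ x : V, x ∈ π' ↔ x ∈ K := by
    intro x; rw [← hπ'.2, List.mem_toFinset]
  have hlen : π.length = π'.length := by
    rw [← List.toFinset_card_of_nodup hπ.1, ← List.toFinset_card_of_nodup hπ'.1, hπ.2, hπ'.2]
  set ρ := τ.drop π.length with hρ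
  have hτeq : τ = π ++ ρ := by
    conv_lhs => rw [← List.take_append_drop π.length τ, htake]
  have hndτ : (π ++ ρ).Nodup := hτeq ▸ hnd
  rw [List.nodup_append] at hndτ
  obtain ⟨hndπ, hndρ, hdisj⟩ := hndτ
  have hρK : ∀ x ∈ ρ, x ∉ K := by
    intro x hx hxK
    exact hdisj x ((hmemπ x).2 hxK) x hx rfl
  -- index computations in τ
  have hidxK : ∀ x ∈ K, τ.idxOf x = π.idxOf x := by
    intro x hx; rw [hτeq]; exact List.idxOf_append_of_mem ((hmemπ x).2 hx)
  have hidxKlt : ∀ x ∈ K, τ.idxOf x < π.length := by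
    intro x hx; rw [hidxK x hx]; exact List.idxOf_lt_length_iff.2 ((hmemπ x).2 hx)
  have hidxN : ∀ x : V, x ∉ K → τ.idxOf x = π.length + ρ.idxOf x := by
    intro x hx; rw [hτeq]
    exact List.idxOf_append_of_notMem (fun hc => hx ((hmemπ x).1 hc))
  -- arcs from outside K never enter K
  have hKout : ∀ a b, f a b → b ∈ K → a ∈ K := by
    intro a b hf hb
    by_contra ha
    have h1 := htop a b hf
    have h2 := hidxKlt b hb
    rw [hidxN a ha] at h1
    omega
  -- the new orientation and ordering
  set f' : V → V → Prop :=
    fun a b => if a ∈ K ∧ b ∈ K then G.Adj a b ∧ π'.idxOf a < π'.idxOf b else f a b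
    with hf'
  set τ' : List V := π' ++ ρ with hτ'
  have hf'_out : ∀ a b, ¬(a ∈ K ∧ b ∈ K) → (f' a b ↔ f a b) := by
    intro a b hab; simp only [hf', if_neg hab]
  -- index facts for τ'
  have hidxK' : ∀ x ∈ K, τ'.idxOf x = π'.idxOf x := by
    intro x hx; exact List.idxOf_append_of_mem ((hmemπ' x).2 hx)
  have hidxKlt' : ∀ x ∈ K, τ'.idxOf x < π'.length := by
    intro x hx; rw [hidxK' x hx]; exact List.idxOf_lt_length_iff.2 ((hmemπ' x).2 hx)
  have hidxN' : ∀ x : V, x ∉ K → τ'.idxOf x = π'.length + ρ.idxOf x := by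
    intro x hx
    exact List.idxOf_append_of_notMem (fun hc => hx ((hmemπ' x).1 hc))
  -- τ' respects f'
  have htop' : ∀ a b, f' a b → τ'.idxOf a < τ'.idxOf b := by
    intro a b hf'ab
    by_cases hab : a ∈ K ∧ b ∈ K
    · rw [hf', if_pos hab] at hf'ab
      rw [hidxK' a hab.1, hidxK' b hab.2]
      exact hf'ab.2
    · rw [hf', if_neg hab] at hf'ab
      by_cases hb : b ∈ K
      · exact absurd ⟨hKout a b hf'ab hb, hb⟩ hab
      · by_cases ha : a ∈ K
        · have h1 := hidxKlt' a ha
          rw [hidxN' b hb]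
          omega
        · have h1 := htop a b hf'ab
          rw [hidxN a ha, hidxN b hb] at h1
          rw [hidxN' a ha, hidxN' b hb]
          omega
  -- f' is an orientation
  have hor' : IsOrientation G f' := by
    constructor
    · intro a b
      by_cases hab : a ∈ K ∧ b ∈ K
      · have hba : b ∈ K ∧ a ∈ K := ⟨hab.2, hab.1⟩
        simp only [hf', if_pos hab, if_pos hba]
        constructor
        · intro hadj
          have hne : a ≠ b := hadj.ne
          have : π'.idxOf a ≠ π'.idxOf b := by
            intro hc
            exact hne ((List.idxOf_inj ((hmemπ' a).2 hab.1)).1 hc)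
          rcases Nat.lt_or_ge (π'.idxOf a) (π'.idxOf b) with h | h
          · exact Or.inl ⟨hadj, h⟩
          · exact Or.inr ⟨hadj.symm, lt_of_le_of_ne h (Ne.symm this)⟩
        · rintro (⟨hadj, _⟩ | ⟨hadj, _⟩)
          · exact hadj
          · exact hadj.symm
      · have hba : ¬(b ∈ K ∧ a ∈ K) := fun hc => hab ⟨hc.2, hc.1⟩
        simp only [hf', if_neg hab, if_neg hba]
        exact hor.1 a b
    · intro a b hf'ab hf'ba
      have h1 := htop' a b hf'ab
      have h2 := htop' b a hf'ba
      omega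
  -- f' is acyclic
  have hac' : IsAcyclicRel f' := by
    intro x hx
    have key : ∀ a b, Relation.TransGen f' a b → τ'.idxOf a < τ'.idxOf b := by
      intro a b h
      induction h with
      | single h => exact htop' _ _ h
      | tail _ h ih => exact ih.trans (htop' _ _ h)
    exact absurd (key x x hx) (lt_irrefl _)
  -- f' is moral
  have hmor' : IsMoral G f' := by
    intro a b c hab hcb hac
    by_cases hb : b ∈ K
    · have haK : a ∈ K := by
        by_cases h' : a ∈ K ∧ b ∈ K
        · exact h'.1
        · rw [hf', if_neg h'] at hab; exact hKout a b hab hb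
      have hcK : c ∈ K := by
        by_cases h' : c ∈ K ∧ b ∈ K
        · exact h'.1
        · rw [hf', if_neg h'] at hcb; exact hKout c b hcb hb
      exact hK haK hcK hac
    · have h1 : ¬(a ∈ K ∧ b ∈ K) := fun hc => hb hc.2
      have h2 : ¬(c ∈ K ∧ b ∈ K) := fun hc => hb hc.2
      rw [hf', if_neg h1] at hab
      rw [hf', if_neg h2] at hcb
      exact hmor a b c hab hcb hac
  -- τ' is a vertex list
  have hvl' : IsVertexList τ' := by
    constructor
    · rw [hτ', List.nodup_append]
      exact ⟨hπ'.1, hndρ, fun x hx y hxρ hxy => hρK y hxρ (hxy ▸ (hmemπ' x).1 hx)⟩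
    · intro x
      by_cases hx : x ∈ K
      · exact List.mem_append_left _ ((hmemπ' x).2 hx)
      · have : x ∈ π ++ ρ := hτeq ▸ hall x
        rcases List.mem_append.1 this with h | h
        · exact absurd ((hmemπ x).1 h) hx
        · exact List.mem_append_right _ h
  refine ⟨f', τ', ⟨hor', hac', hmor'⟩, ⟨hvl', htop'⟩, ?_, ?_⟩
  · rw [hτ']; exact List.take_left
  · exact (hf'_out u v huv).2 hfuv

end Aux

theorem stmt11 {V : Type*} [Fintype V] [DecidableEq V] (G : SimpleGraph V)
    (hconn : G.Connected) (hchord : IsChordal G)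
    (K : Finset V) (hK : G.IsClique ↑K)
    (π π' : List V)
    (hπ : π.Nodup ∧ π.toFinset = K) (hπ' : π'.Nodup ∧ π'.toFinset = K) :
    (∀ u v : V, ¬(u ∈ K ∧ v ∈ K) →
      (UnionArcPerm G π u v ↔ UnionArcPerm G π' u v)) ∧
    ∀ u v : V, u ∉ K → v ∉ K →
      (UnionUndirReach G K π u v ↔ UnionUndirReach G K π' u v) := by
  have main : ∀ (σ σ' : List V), σ.Nodup ∧ σ.toFinset = K → σ'.Nodup ∧ σ'.toFinset = K →
      ∀ u v : V, ¬(u ∈ K ∧ v ∈ K) → UnionArcPerm G σ u v → UnionArcPerm G σ' u v :=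
    fun σ σ' hσ hσ' u v huv => unionArcPerm_transfer G K hK σ σ' hσ hσ' huv
  have arcs : ∀ u v : V, ¬(u ∈ K ∧ v ∈ K) →
      (UnionArcPerm G π u v ↔ UnionArcPerm G π' u v) :=
    fun u v huv => ⟨main π π' hπ hπ' u v huv, main π' π hπ' hπ u v huv⟩
  refine ⟨arcs, fun u v hu hv => ?_⟩
  have hmono : ∀ (σ σ' : List V), σ.Nodup ∧ σ.toFinset = K → σ'.Nodup ∧ σ'.toFinset = K →
      UnionUndirReach G K σ u v → UnionUndirReach G K σ' u v := by
    intro σ σ' hσ hσ' h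
    refine Relation.ReflTransGen.mono ?_ u v h
    rintro a b ⟨ha, hb, h1, h2⟩
    exact ⟨ha, hb, main σ σ' hσ hσ' a b (fun hc => ha hc.1) h1,
      main σ σ' hσ hσ' b a (fun hc => hb hc.1) h2⟩
  exact ⟨hmono π π' hπ hπ', hmono π' π hπ' hπ⟩
end

section
/- Let (T, r, ι) be a rooted clique tree of a connected chordal graph G. For every node v of T, the set FP(v) of all separators ι(x_i) ∩ ι(x_{i+1}) contained in ι(v), where x_1 = r, ..., x_p = v is the unique root-to-v path, forms a chain under inclusion: its elements can be ordered X_1 ⊊ X_2 ⊊ ... ⊊ X_ℓ. -/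
open SimpleGraph in
lemma key_coh {V : Type*} {ν : Type*} [DecidableEq ν] {T : SimpleGraph ν} (hT : T.IsTree)
    (ι : ν → Finset V)
    (hcoh : ∀ u : V, (T.induce {x : ν | u ∈ ι x}).Connected)
    (u : V) {a b : ν} (ha : u ∈ ι a) (hb : u ∈ ι b) (q : T.Walk a b) (hq : q.IsPath) :
    ∀ x ∈ q.support, u ∈ ι x := by
  intro x hx
  obtain ⟨w⟩ := (hcoh u).preconnected ⟨a, ha⟩ ⟨b, hb⟩
  let w' : T.Walk a b := w.map (SimpleGraph.Embedding.induce {x : ν | u ∈ ι x}).toHom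
  have hsub : ∀ y ∈ w'.support, u ∈ ι y := by
    intro y hy
    rw [show w'.support = _ from SimpleGraph.Walk.support_map _ _, List.mem_map] at hy
    obtain ⟨⟨z, hz⟩, _, rfl⟩ := hy
    exact hz
  have heq : w'.bypass = q := (hT.existsUnique_path a b).unique w'.bypass_isPath hq
  exact hsub x (SimpleGraph.Walk.support_bypass_subset _ (heq ▸ hx))

lemma mem_dropUntil_of_le {ν : Type*} [DecidableEq ν] {T : SimpleGraph ν} {r v : ν}
    (p : T.Walk r v) (hp : p.IsPath) (i : ℕ) (hi : i < p.support.length) (k : ℕ) (hik : i ≤ k)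
    (hk : k < p.support.length) :
    p.support[k] ∈ (p.dropUntil (p.support[i]) (p.support.getElem_mem hi)).support := by
  set c := p.support[i] with hc
  have hcmem : c ∈ p.support := p.support.getElem_mem hi
  set t := p.takeUntil c hcmem with ht
  set d := p.dropUntil c hcmem with hd
  have hsup : p.support = t.support ++ d.support.tail := by
    conv_lhs => rw [← p.take_spec hcmem]
    exact SimpleGraph.Walk.support_append t d
  have hlen : t.support.length = t.length + 1 := t.length_support
  have hplen : p.support.length = t.support.length + d.support.tail.length := by
    rw [hsup, List.length_append]
  have hlt : t.length < p.support.length := by omega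
  have hgetlast : p.support[t.length]'hlt = c := by
    have h1 : p.support[t.length]'hlt = t.support[t.length]'(by omega) := by
      rw [List.getElem_of_eq hsup, List.getElem_append_left]
    rw [h1]
    have h2 := t.getLast_support
    rw [List.getLast_eq_getElem] at h2
    convert h2 using 2
    omega
  have hti : t.length = i := by
    have hnd := hp.support_nodup
    exact (List.Nodup.getElem_inj_iff hnd).mp (by rw [hgetlast])
  rcases Nat.eq_or_lt_of_le hik with h | h
  · have he : p.support[k] = c := by
      rw [hc]; congr 1; omega
    rw [he]
    exact d.start_mem_support
  · have hk1 : t.support.length ≤ k := by omega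
    have h3 : p.support[k] = d.support.tail[k - t.support.length]'(by omega) := by
      rw [List.getElem_of_eq hsup, List.getElem_append_right hk1]
    rw [h3]
    exact List.mem_of_mem_tail (List.getElem_mem _)


theorem stmt15 {V : Type*} [Fintype V] [DecidableEq V] {ν : Type*} [Fintype ν]
    (G : SimpleGraph V) (hconn : G.Connected) (hchord : IsChordal G)
    (T : SimpleGraph ν) (hT : T.IsTree) (r : ν) (ι : ν → Finset V)
    (hmax : ∀ x, IsMaxClique G (ι x)) (hinj : Function.Injective ι)
    (hsurj : ∀ K : Finset V, IsMaxClique G K → ∃ x, ι x = K)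
    (hcoh : ∀ u : V, (T.induce {x : ν | u ∈ ι x}).Connected)
    (v : ν) (p : T.Walk r v) (hp : p.IsPath) :
    IsChain (· ⊆ ·) {S : Finset V |
      ∃ (i : ℕ) (h : i + 1 < p.support.length),
        S = ι (p.support.get ⟨i, by omega⟩) ∩ ι (p.support.get ⟨i + 1, h⟩) ∧
        S ⊆ ι v} := by
  classical
  have main : ∀ (i j : ℕ) (hi : i + 1 < p.support.length) (hj : j + 1 < p.support.length),
      i ≤ j →
      ι (p.support.get ⟨i, by omega⟩) ∩ ι (p.support.get ⟨i + 1, hi⟩) ⊆ ι v →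
      ι (p.support.get ⟨i, by omega⟩) ∩ ι (p.support.get ⟨i + 1, hi⟩) ⊆
        ι (p.support.get ⟨j, by omega⟩) ∩ ι (p.support.get ⟨j + 1, hj⟩) := by
    intro i j hi hj hij hv u hu
    simp only [List.get_eq_getElem] at hu hv ⊢
    have hui : u ∈ ι (p.support[i]'(by omega)) := (Finset.mem_inter.mp hu).1
    have huv : u ∈ ι v := hv hu
    have hpath : (p.dropUntil (p.support[i]'(by omega))
        (p.support.getElem_mem (by omega))).IsPath := hp.dropUntil _
    have key := key_coh hT ι hcoh u hui huv _ hpath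
    exact Finset.mem_inter.mpr
      ⟨key _ (mem_dropUntil_of_le p hp i (by omega) j hij (by omega)),
       key _ (mem_dropUntil_of_le p hp i (by omega) (j + 1) (by omega) hj)⟩
  rintro S ⟨i, hi, hSeq, hSv⟩ S' ⟨j, hj, hS'eq, hS'v⟩ _
  rcases le_total i j with h | h
  · left
    rw [hSeq, hS'eq]
    exact main i j hi hj h (hSeq ▸ hSv)
  · right
    rw [hSeq, hS'eq]
    exact main j i hj hi h (hS'eq ▸ hS'v)
end

section
/- In a rooted clique tree (T, r, ι) of a connected chordal graph G, every S-flower F (for a minimal separator S) induces a connected subtree of T. -/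
/-- `F` is an `S`-flower of `G`: a maximal collection of maximal cliques, each containing
`S`, whose union is connected in `G` with the vertices of `S` removed. -/
def IsFlower {V : Type*} (G : SimpleGraph V) (S : Finset V) (F : Set (Finset V)) : Prop :=
  (∀ K ∈ F, IsMaxClique G K ∧ S ⊆ K) ∧
  (G.induce ((⋃ K ∈ F, (K : Set V)) \ ↑S)).Connected ∧
  ∀ F' : Set (Finset V), (∀ K ∈ F', IsMaxClique G K ∧ S ⊆ K) →
    (G.induce ((⋃ K ∈ F', (K : Set V)) \ ↑S)).Connected → F ⊆ F' → F' = F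

open SimpleGraph

lemma flower_exists_maxclique' {V : Type*} [Fintype V] [DecidableEq V]
    (G : SimpleGraph V) (s : Finset V) (hs : G.IsClique ↑s) :
    ∃ K : Finset V, (G.IsClique ↑K ∧ ∀ K' : Finset V, G.IsClique ↑K' → K ⊆ K' → K = K') ∧ s ⊆ K := by
  classical
  set C : Finset (Finset V) := Finset.univ.filter (fun K => G.IsClique ↑K ∧ s ⊆ K) with hC
  have hsC : s ∈ C := by simp [hC, hs]
  obtain ⟨K, hKC, hKmax⟩ := C.exists_max_image (fun K => K.card) ⟨s, hsC⟩
  simp only [hC, Finset.mem_filter, Finset.mem_univ, true_and] at hKC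
  refine ⟨K, ⟨hKC.1, fun K' hK' hKK' => ?_⟩, hKC.2⟩
  have hK'C : K' ∈ C := by
    simp only [hC, Finset.mem_filter, Finset.mem_univ, true_and]
    exact ⟨hK', hKC.2.trans hKK'⟩
  exact Finset.eq_of_subset_of_card_le hKK' (hKmax K' hK'C)

lemma flower_clique_induce_connected' {V : Type*} {G : SimpleGraph V} {s : Set V}
    (hs : G.IsClique s) (hne : s.Nonempty) : (G.induce s).Connected := by
  obtain ⟨v, hv⟩ := hne
  haveI : Nonempty ↑s := ⟨⟨v, hv⟩⟩
  refine ⟨fun a b => ?_⟩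
  rcases eq_or_ne a b with rfl | hab
  · exact Reachable.refl _
  · have h' : G.Adj a.1 b.1 := hs a.2 b.2 (fun h => hab (Subtype.ext h))
    have h2 : (G.induce s).Adj a b := h'
    exact h2.reachable

lemma flower_walk_in_set' {ν : Type*} {T : SimpleGraph ν} {W : Set ν}
    (hW : (T.induce W).Connected) {x y : ν} (hx : x ∈ W) (hy : y ∈ W) :
    ∃ q : T.Walk x y, ∀ v ∈ q.support, v ∈ W := by
  obtain ⟨q0⟩ := hW ⟨x, hx⟩ ⟨y, hy⟩
  refine ⟨q0.map (SimpleGraph.Embedding.induce W).toHom, ?_⟩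
  intro v hv
  have hv2 : v ∈ (q0.map (SimpleGraph.Embedding.induce W).toHom).support := hv
  rw [Walk.support_map, List.mem_map] at hv2
  obtain ⟨⟨v', hv'⟩, _, rfl⟩ := hv2
  exact hv'

lemma flower_reach_induce' {ν : Type*} {T : SimpleGraph ν} {W : Set ν} {x y : ν}
    (p : T.Walk x y) (h : ∀ z ∈ p.support, z ∈ W) (hx : x ∈ W) (hy : y ∈ W) :
    (T.induce W).Reachable ⟨x, hx⟩ ⟨y, hy⟩ := by
  induction p with
  | nil => exact Reachable.refl _
  | @cons x x' y ha q ih =>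
    have hx' : x' ∈ W := h x' (by simp)
    have step : (T.induce W).Adj ⟨x, hx⟩ ⟨x', hx'⟩ := ha
    exact step.reachable.trans (ih (fun z hz => h z (by simp [hz])) hx' hy)

lemma flower_path_support' {ν : Type*} [DecidableEq ν] {T : SimpleGraph ν} (hT : T.IsTree) {W : Set ν}
    (hW : (T.induce W).Connected) {x y : ν} (hx : x ∈ W) (hy : y ∈ W)
    (p : T.Walk x y) (hp : p.IsPath) : ∀ z ∈ p.support, z ∈ W := by
  obtain ⟨q, hq⟩ := flower_walk_in_set' hW hx hy
  have heq : p = q.bypass := (hT.existsUnique_path x y).unique hp q.bypass_isPath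
  intro z hz
  exact hq z (q.support_bypass_subset (heq ▸ hz))

lemma flower_side_aux' {ν : Type*} {T : SimpleGraph ν} {a b x c : ν} (p : T.Walk x c)
    (hc : (T.deleteEdges {s(a,b)}).Reachable c a ∨ (T.deleteEdges {s(a,b)}).Reachable c b) :
    (T.deleteEdges {s(a,b)}).Reachable x a ∨ (T.deleteEdges {s(a,b)}).Reachable x b := by
  induction p with
  | nil => exact hc
  | @cons x y _ h q ih =>
    by_cases he : s(x, y) = s(a, b)
    · rw [Sym2.eq_iff] at he
      rcases he with ⟨rfl, rfl⟩ | ⟨rfl, rfl⟩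
      · exact Or.inl (Reachable.refl _)
      · exact Or.inr (Reachable.refl _)
    · have h' : (T.deleteEdges {s(a,b)}).Adj x y := by
        rw [deleteEdges_adj]; exact ⟨h, by simpa using he⟩
      rcases ih hc with hr | hr
      · exact Or.inl (h'.reachable.trans hr)
      · exact Or.inr (h'.reachable.trans hr)

lemma flower_side' {ν : Type*} {T : SimpleGraph ν} (hc : T.Connected) (a b x : ν) :
    (T.deleteEdges {s(a,b)}).Reachable x a ∨ (T.deleteEdges {s(a,b)}).Reachable x b := by
  obtain ⟨p⟩ := hc x a
  exact flower_side_aux' p (Or.inl (Reachable.refl _))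

lemma flower_not_reach' {ν : Type*} {T : SimpleGraph ν} (hT : T.IsTree) {a b : ν}
    (hab : T.Adj a b) : ¬ (T.deleteEdges {s(a,b)}).Reachable a b := by
  have hb : T.IsBridge s(a, b) :=
    (isAcyclic_iff_forall_edge_isBridge.mp hT.IsAcyclic) (by rw [mem_edgeSet]; exact hab)
  exact isBridge_iff.mp hb

theorem stmt16 {V : Type*} [Fintype V] [DecidableEq V] {ν : Type*} [Fintype ν]
    (G : SimpleGraph V) (hconn : G.Connected) (hchord : IsChordal G)
    (T : SimpleGraph ν) (hT : T.IsTree) (r : ν) (ι : ν → Finset V)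
    (hmax : ∀ x, IsMaxClique G (ι x)) (hinj : Function.Injective ι)
    (hsurj : ∀ K : Finset V, IsMaxClique G K → ∃ x, ι x = K)
    (hcoh : ∀ u : V, (T.induce {x : ν | u ∈ ι x}).Connected)
    (S : Finset V) (hS : IsMinimalSeparator G S)
    (F : Set (Finset V)) (hF : IsFlower G S F) :
    (T.induce {x : ν | ι x ∈ F}).Connected := by
  classical
  obtain ⟨hF1, hF2, hF3⟩ := hF
  set U : Set V := ⋃ K ∈ F, (K : Set V) with hU
  have hnode : ∀ s : Finset V, G.IsClique ↑s → ∃ c : ν, s ⊆ ι c := by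
    intro s hs
    obtain ⟨K, hK, hsK⟩ := flower_exists_maxclique' G s hs
    obtain ⟨c, rfl⟩ := hsurj K hK
    exact ⟨c, hsK⟩
  have cross : ∀ {a b : ν}, T.Adj a b → ∀ {u : V} {x z : ν}, u ∈ ι x → u ∈ ι z →
      (T.deleteEdges {s(a,b)}).Reachable x a → (T.deleteEdges {s(a,b)}).Reachable z b →
      u ∈ ι a ∧ u ∈ ι b := by
    intro a b hab u x z hux huz hxa hzb
    obtain ⟨q, hq⟩ := flower_walk_in_set' (W := {x' : ν | u ∈ ι x'}) (hcoh u) hux huz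
    by_cases he : s(a,b) ∈ q.edges
    · exact ⟨hq a (q.fst_mem_support_of_mem_edges he), hq b (q.snd_mem_support_of_mem_edges he)⟩
    · exfalso
      have hr : (T.deleteEdges {s(a,b)}).Reachable x z := by
        refine ⟨q.toDeleteEdges _ ?_⟩
        intro e he'
        simp only [Set.mem_singleton_iff]
        rintro rfl
        exact he he'
      exact flower_not_reach' hT hab (hxa.symm.trans (hr.trans hzb))
  have sep : ∀ {a b : ν}, T.Adj a b → ∀ {u w : V} (p : G.Walk u w), ∀ {x z : ν},
      u ∈ ι x → (T.deleteEdges {s(a,b)}).Reachable x a →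
      w ∈ ι z → (T.deleteEdges {s(a,b)}).Reachable z b →
      ∃ v ∈ p.support, v ∈ ι a ∧ v ∈ ι b := by
    intro a b hab u w p
    induction p with
    | nil =>
      intro x z hux hxa huz hzb
      exact ⟨_, by simp, cross hab hux huz hxa hzb⟩
    | @cons u u' w h q ih =>
      intro x z hux hxa hwz hzb
      have hclique : G.IsClique (↑({u, u'} : Finset V)) := by
        rw [Finset.coe_insert, Finset.coe_singleton]
        exact isClique_pair.mpr (fun _ => h)
      obtain ⟨c, hc⟩ := hnode {u, u'} hclique
      have huc : u ∈ ι c := hc (by simp)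
      have hu'c : u' ∈ ι c := hc (by simp)
      rcases flower_side' hT.isConnected a b c with hca | hcb
      · obtain ⟨v, hv, hvab⟩ := ih hu'c hca hwz hzb
        exact ⟨v, by simp [hv], hvab⟩
      · exact ⟨u, by simp, cross hab hux huc hxa hcb⟩
  obtain ⟨⟨v0, hv0⟩⟩ := hF2.nonempty
  have hv0S : v0 ∉ (↑S : Set V) := hv0.2
  obtain ⟨K0, hK0F, hv0K0⟩ : ∃ K0, K0 ∈ F ∧ v0 ∈ K0 := by
    have := hv0.1
    simp only [hU, Set.mem_iUnion, Finset.mem_coe, exists_prop] at this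
    exact this
  have hne : ∀ K : Finset V, IsMaxClique G K → S ⊆ K → ∃ u, u ∈ K ∧ u ∉ S := by
    intro K hK hSK
    by_contra hcon
    push_neg at hcon
    have hKS : K = S := Finset.Subset.antisymm hcon hSK
    have hKK0 : K = K0 := hK.2 K0 (hF1 K0 hK0F).1.1 (hKS ▸ (hF1 K0 hK0F).2)
    exact hv0S (by exact_mod_cast hKS ▸ hKK0 ▸ hv0K0)
  have key : ∀ {x y : ν} (p : T.Walk x y), p.IsPath → (∀ z ∈ p.support, S ⊆ ι z) →
      ι x ∈ F → ι y ∈ F → ∀ z ∈ p.support, ι z ∈ F := by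
    intro x y p
    induction p with
    | nil =>
      intro _ _ hx _ z hz
      simp only [Walk.support_nil, List.mem_singleton] at hz
      exact hz ▸ hx
    | @cons x x' y h q ih =>
      intro hp hsup hxF hyF z hz
      have hq : q.IsPath := hp.of_cons
      have hxq : x ∉ q.support := ((Walk.cons_isPath_iff h q).mp hp).2
      have hSx' : S ⊆ ι x' := hsup x' (by simp)
      have hyx' : (T.deleteEdges {s(x,x')}).Reachable x' y := by
        refine ⟨q.toDeleteEdges _ ?_⟩
        intro e he
        simp only [Set.mem_singleton_iff]
        rintro rfl
        exact hxq (q.fst_mem_support_of_mem_edges he)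
      have hw : ∃ w, w ∈ ι x ∧ w ∈ ι x' ∧ w ∉ S := by
        by_contra hcon
        push_neg at hcon
        obtain ⟨u0, hu0x, hu0S⟩ := hne (ι x) (hmax x) ((hF1 _ hxF).2)
        obtain ⟨w0, hw0y, hw0S⟩ := hne (ι y) (hmax y) ((hF1 _ hyF).2)
        have hu0U : u0 ∈ U \ ↑S :=
          ⟨Set.mem_biUnion hxF (Finset.mem_coe.mpr hu0x), by exact_mod_cast hu0S⟩
        have hw0U : w0 ∈ U \ ↑S :=
          ⟨Set.mem_biUnion hyF (Finset.mem_coe.mpr hw0y), by exact_mod_cast hw0S⟩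
        obtain ⟨p0, hp0⟩ := flower_walk_in_set' hF2 hu0U hw0U
        obtain ⟨v, hvmem, hvx, hvx'⟩ :=
          sep h p0 hu0x (Reachable.refl x) hw0y hyx'.symm
        exact (hp0 v hvmem).2 (by exact_mod_cast hcon v hvx hvx')
      obtain ⟨w, hwx, hwx', hwS⟩ := hw
      have hins : insert (ι x') F = F := by
        apply hF3
        · intro K hK
          rcases Set.mem_insert_iff.mp hK with rfl | hK
          · exact ⟨hmax x', hSx'⟩
          · exact hF1 K hK
        · have hset : (⋃ K ∈ insert (ι x') F, (K : Set V)) \ ↑S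
              = (((ι x' : Finset V) : Set V) \ ↑S) ∪ (U \ ↑S) := by
            rw [Set.biUnion_insert, Set.union_diff_distrib]
          rw [hset]
          refine SimpleGraph.induce_union_connected ?_ hF2.preconnected ?_
          · refine (flower_clique_induce_connected' ((hmax x').1.subset Set.diff_subset)
              ⟨w, Finset.mem_coe.mpr hwx', by exact_mod_cast hwS⟩).preconnected
          · exact ⟨w, ⟨Finset.mem_coe.mpr hwx', by exact_mod_cast hwS⟩,
              ⟨Set.mem_biUnion hxF (Finset.mem_coe.mpr hwx), by exact_mod_cast hwS⟩⟩
        · exact Set.subset_insert _ _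
      have hx'F : ι x' ∈ F := hins ▸ Set.mem_insert (ι x') F
      rcases (by simpa using hz : z = x ∨ z ∈ q.support) with rfl | hz'
      · exact hxF
      · exact ih hq (fun z hz => hsup z (by simp [hz])) hx'F hyF z hz'
  obtain ⟨x0, hx0⟩ := hsurj K0 (hF1 K0 hK0F).1
  have hx0F : ι x0 ∈ F := hx0 ▸ hK0F
  haveI : Nonempty {x : ν | ι x ∈ F} := ⟨⟨x0, hx0F⟩⟩
  refine ⟨fun a b => ?_⟩
  obtain ⟨p0⟩ := hT.isConnected a.1 b.1
  have hp : p0.bypass.IsPath := p0.bypass_isPath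
  have haF : ι a.1 ∈ F := a.2
  have hbF : ι b.1 ∈ F := b.2
  have hsup : ∀ z ∈ p0.bypass.support, S ⊆ ι z := by
    intro z hz u hu
    exact flower_path_support' hT (hcoh u) ((hF1 _ haF).2 hu) ((hF1 _ hbF).2 hu)
      p0.bypass hp z hz
  have hall : ∀ z ∈ p0.bypass.support, z ∈ {x : ν | ι x ∈ F} :=
    fun z hz => key p0.bypass hp hsup haF hbF z hz
  exact flower_reach_induce' p0.bypass hall haF hbF
end

section
/- For a minimal separator S of a connected chordal graph G with rooted clique tree (T, r, ι), the set of S-flowers partitions the set of maximal cliques containing S, and there is a unique least S-flower with respect to the order F_1 ≺_T F_2 iff F_1 contains a node on the unique path from F_2 to the root. -/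
/-- `F₁ ≺_T F₂`: the flower `F₁` contains a clique whose tree node lies on the unique
path in `T` from (a node of) `F₂` to the root `r`. -/
def FlowerPrec {V : Type*} {ν : Type*} (T : SimpleGraph ν) (r : ν) (ι : ν → Finset V)
    (F₁ F₂ : Set (Finset V)) : Prop :=
  ∃ (x y : ν) (p : T.Walk y r), p.IsPath ∧ ι y ∈ F₂ ∧ ι x ∈ F₁ ∧ x ∈ p.support

/-! ### Auxiliary machinery -/

section Aux17

open SimpleGraph

/-- Step relation on maximal cliques containing `S`. -/
def Rrel17 {V : Type*} (G : SimpleGraph V) (S : Finset V) (K K' : Finset V) : Prop :=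
  (IsMaxClique G K ∧ S ⊆ K) ∧ (IsMaxClique G K' ∧ S ⊆ K') ∧
    ∃ u v, u ∈ K ∧ u ∉ S ∧ v ∈ K' ∧ v ∉ S ∧ (u = v ∨ G.Adj u v)

/-- The `Rrel17`-component of `K`. -/
def flowerOf17 {V : Type*} (G : SimpleGraph V) (S K : Finset V) : Set (Finset V) :=
  {K' | Relation.ReflTransGen (Rrel17 G S) K K'}

variable {V : Type*} {G : SimpleGraph V}

lemma exists_maxclique_superset17 [Fintype V] [DecidableEq V] (K : Finset V)
    (hK : G.IsClique ↑K) : ∃ K', IsMaxClique G K' ∧ K ⊆ K' := by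
  classical
  obtain ⟨m, hm, hmax⟩ : ∃ m ∈ (Finset.univ.filter fun K' : Finset V => G.IsClique ↑K' ∧ K ⊆ K'),
      ∀ x ∈ (Finset.univ.filter fun K' : Finset V => G.IsClique ↑K' ∧ K ⊆ K'), ¬ m < x := by
    obtain ⟨m, hm⟩ := Finset.exists_maximal
      (s := Finset.univ.filter fun K' : Finset V => G.IsClique ↑K' ∧ K ⊆ K') ⟨K, by simp [hK]⟩
    exact ⟨m, hm.1, fun x hx hlt => lt_irrefl m (lt_of_lt_of_le hlt (hm.2 hx hlt.le))⟩
  simp only [Finset.mem_filter, Finset.mem_univ, true_and] at hm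
  refine ⟨m, ⟨hm.1, fun K' hc hsub => ?_⟩, hm.2⟩
  by_contra hne
  exact hmax K' (by simp [hc, hm.2.trans hsub])
    (Finset.lt_iff_ssubset.mpr (Finset.ssubset_iff_subset_ne.mpr ⟨hsub, hne⟩))

lemma induce_union_connected17 {A B : Set V} (hA : (G.induce A).Connected)
    (hB : (G.induce B).Connected) (hAB : (A ∩ B).Nonempty) :
    (G.induce (A ∪ B)).Connected := by
  obtain ⟨m, hmA, hmB⟩ := hAB
  let fA : G.induce A →g G.induce (A ∪ B) := ⟨fun v => ⟨v.1, Or.inl v.2⟩, fun {a b} h => h⟩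
  let fB : G.induce B →g G.induce (A ∪ B) := ⟨fun v => ⟨v.1, Or.inr v.2⟩, fun {a b} h => h⟩
  rw [SimpleGraph.connected_iff]
  refine ⟨fun x y => ?_, ⟨⟨m, Or.inl hmA⟩⟩⟩
  have key : ∀ x : ↥(A ∪ B), (G.induce (A ∪ B)).Reachable x ⟨m, Or.inl hmA⟩ := by
    rintro ⟨x, hx | hx⟩
    · have h := (hA.preconnected ⟨x, hx⟩ ⟨m, hmA⟩).map fA
      exact h
    · have h := (hB.preconnected ⟨x, hx⟩ ⟨m, hmB⟩).map fB
      have he : (⟨m, Or.inr hmB⟩ : ↥(A ∪ B)) = ⟨m, Or.inl hmA⟩ := Subtype.ext rfl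
      exact he ▸ h
  exact (key x).trans (key y).symm

lemma flowerOf17_mem_kset {S K : Finset V} (hK : IsMaxClique G K ∧ S ⊆ K) {K' : Finset V}
    (h : K' ∈ flowerOf17 G S K) : IsMaxClique G K' ∧ S ⊆ K' := by
  induction h with
  | refl => exact hK
  | tail _ step _ => exact step.2.1

end Aux17

section Tree17

open SimpleGraph

variable {ν : Type*} {T : SimpleGraph ν}

/-- The unique path between two vertices of a tree. -/
noncomputable def tpath17 (hT : T.IsTree) (z w : ν) : T.Walk z w :=
  ((isTree_iff_existsUnique_path.mp hT).2 z w).choose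

lemma tpath17_isPath (hT : T.IsTree) (z w : ν) : (tpath17 hT z w).IsPath :=
  ((isTree_iff_existsUnique_path.mp hT).2 z w).choose_spec.1

lemma tpath17_unique (hT : T.IsTree) {z w : ν} (p : T.Walk z w) (hp : p.IsPath) :
    p = tpath17 hT z w :=
  ((isTree_iff_existsUnique_path.mp hT).2 z w).choose_spec.2 p hp

lemma tpath17_takeUntil [DecidableEq ν] (hT : T.IsTree) {z w m : ν}
    (hm : m ∈ (tpath17 hT z w).support) :
    (tpath17 hT z w).takeUntil m hm = tpath17 hT z m ∧
      (tpath17 hT z w).dropUntil m hm = tpath17 hT m w :=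
  ⟨tpath17_unique hT _ ((tpath17_isPath hT z w).takeUntil hm),
   tpath17_unique hT _ ((tpath17_isPath hT z w).dropUntil hm)⟩

lemma tpath17_split [DecidableEq ν] (hT : T.IsTree) {z w m : ν}
    (hm : m ∈ (tpath17 hT z w).support) :
    tpath17 hT z w = (tpath17 hT z m).append (tpath17 hT m w) := by
  obtain ⟨h1, h2⟩ := tpath17_takeUntil hT hm
  rw [← h1, ← h2, SimpleGraph.Walk.take_spec]

lemma tpath17_length_split [DecidableEq ν] (hT : T.IsTree) {z w m : ν}
    (hm : m ∈ (tpath17 hT z w).support) :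
    (tpath17 hT z w).length = (tpath17 hT z m).length + (tpath17 hT m w).length := by
  conv_lhs => rw [tpath17_split hT hm]
  exact SimpleGraph.Walk.length_append _ _

lemma tpath17_adj [DecidableEq ν] (hT : T.IsTree) {z c : ν} (h : T.Adj z c) (r : ν) :
    tpath17 hT z r = SimpleGraph.Walk.cons h (tpath17 hT c r) ∨
      tpath17 hT c r = SimpleGraph.Walk.cons h.symm (tpath17 hT z r) := by
  by_cases hz : z ∈ (tpath17 hT c r).support
  · right
    have hp : (SimpleGraph.Walk.cons h.symm (SimpleGraph.Walk.nil : T.Walk z z)).IsPath :=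
      SimpleGraph.Walk.IsPath.nil.cons (by simp [h.ne'])
    have h1 : (tpath17 hT c r).takeUntil z hz = SimpleGraph.Walk.cons h.symm SimpleGraph.Walk.nil :=
      ((tpath17_takeUntil hT hz).1).trans (tpath17_unique hT _ hp).symm
    have hspec := SimpleGraph.Walk.take_spec (tpath17 hT c r) hz
    rw [h1, (tpath17_takeUntil hT hz).2] at hspec
    rw [← hspec]
    simp [SimpleGraph.Walk.cons_append]
  · left
    exact (tpath17_unique hT (SimpleGraph.Walk.cons h (tpath17 hT c r))
      (((tpath17_isPath hT c r)).cons hz)).symm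

lemma tpath17_med [DecidableEq ν] (hT : T.IsTree) (r : ν) :
    ∀ {z w : ν} (π : T.Walk z w), π.IsPath →
      ∃ m, m ∈ π.support ∧ m ∈ (tpath17 hT z r).support ∧ m ∈ (tpath17 hT w r).support := by
  intro z w π
  induction π with
  | @nil u =>
    intro _
    exact ⟨u, by simp, SimpleGraph.Walk.start_mem_support _, SimpleGraph.Walk.start_mem_support _⟩
  | @cons z c w h π ih =>
    intro hp
    by_cases hz : z ∈ (tpath17 hT w r).support
    · exact ⟨z, by simp, SimpleGraph.Walk.start_mem_support _, hz⟩
    · obtain ⟨m, hm1, hm2, hm3⟩ := ih hp.of_cons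
      refine ⟨m, by simp [hm1], ?_, hm3⟩
      rcases tpath17_adj hT h r with h1 | h2
      · rw [h1, SimpleGraph.Walk.support_cons]
        exact List.mem_cons_of_mem _ hm2
      · rw [h2, SimpleGraph.Walk.support_cons] at hm2
        rcases List.mem_cons.mp hm2 with rfl | hm2'
        · exfalso
          apply hz
          have hd := (tpath17_takeUntil hT hm3).2
          have hz' : z ∈ (tpath17 hT m r).support := by
            rw [h2, SimpleGraph.Walk.support_cons]
            exact List.mem_cons_of_mem _ (SimpleGraph.Walk.start_mem_support _)
          rw [← hd] at hz'
          exact SimpleGraph.Walk.support_dropUntil_subset _ hm3 hz'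
        · exact hm2'

lemma side_disjoint17 (hT : T.IsTree) {p q : ν} (hpq : T.Adj p q) :
    ¬ (T.deleteEdges {s(p,q)}).Reachable p q := by
  have h := (isAcyclic_iff_forall_adj_isBridge.mp hT.IsAcyclic) hpq
  rw [SimpleGraph.isBridge_iff] at h
  exact h

lemma side_total17 (hT : T.IsTree) {p q : ν} (hpq : T.Adj p q) (z : ν) :
    (T.deleteEdges {s(p,q)}).Reachable z p ∨ (T.deleteEdges {s(p,q)}).Reachable z q := by
  have key : ∀ {x y : ν} (_ : T.Walk x y),
      ((T.deleteEdges {s(p,q)}).Reachable y p ∨ (T.deleteEdges {s(p,q)}).Reachable y q) →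
      ((T.deleteEdges {s(p,q)}).Reachable x p ∨ (T.deleteEdges {s(p,q)}).Reachable x q) := by
    intro x y w
    induction w with
    | nil => exact fun h => h
    | @cons x c y h w ih =>
      intro hbase
      by_cases he : s(x, c) = s(p, q)
      · rcases Sym2.eq_iff.mp he with ⟨rfl, rfl⟩ | ⟨rfl, rfl⟩
        · exact Or.inl (SimpleGraph.Reachable.refl _)
        · exact Or.inr (SimpleGraph.Reachable.refl _)
      · have hadj : (T.deleteEdges {s(p,q)}).Adj x c :=
          SimpleGraph.deleteEdges_adj.mpr ⟨h, by simp [he]⟩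
        rcases ih hbase with h' | h'
        exacts [Or.inl (hadj.reachable.trans h'), Or.inr (hadj.reachable.trans h')]
  obtain ⟨w⟩ := hT.isConnected z p
  exact key w (Or.inl (SimpleGraph.Reachable.refl p))

lemma side_cross17 (hT : T.IsTree) {p q : ν} (hpq : T.Adj p q) :
    ∀ {z₁ z₂ : ν} (w : T.Walk z₁ z₂),
      (T.deleteEdges {s(p,q)}).Reachable z₁ p → (T.deleteEdges {s(p,q)}).Reachable z₂ q →
      p ∈ w.support ∧ q ∈ w.support := by
  intro z₁ z₂ w
  induction w with
  | nil =>
    intro h1 h2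
    exact absurd (h1.symm.trans h2) (side_disjoint17 hT hpq)
  | @cons x c y h w ih =>
    intro h1 h2
    by_cases he : s(x,c) = s(p,q)
    · rcases Sym2.eq_iff.mp he with ⟨rfl, rfl⟩ | ⟨rfl, rfl⟩
      · exact ⟨by simp, by
          rw [SimpleGraph.Walk.support_cons]
          exact List.mem_cons_of_mem _ (SimpleGraph.Walk.start_mem_support _)⟩
      · exact ⟨by
          rw [SimpleGraph.Walk.support_cons]
          exact List.mem_cons_of_mem _ (SimpleGraph.Walk.start_mem_support _), by simp⟩
    · have hadj : (T.deleteEdges {s(p,q)}).Adj x c :=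
        SimpleGraph.deleteEdges_adj.mpr ⟨h, by simp [he]⟩
      obtain ⟨hp', hq'⟩ := ih (hadj.symm.reachable.trans h1) h2
      constructor
      · rw [SimpleGraph.Walk.support_cons]; exact List.mem_cons_of_mem _ hp'
      · rw [SimpleGraph.Walk.support_cons]; exact List.mem_cons_of_mem _ hq'

lemma dart_sides17 (hT : T.IsTree) :
    ∀ {x y : ν} (π : T.Walk x y), π.edges.Nodup → ∀ d ∈ π.darts,
      (T.deleteEdges {s(d.toProd.1, d.toProd.2)}).Reachable x d.toProd.1 ∧
      (T.deleteEdges {s(d.toProd.1, d.toProd.2)}).Reachable d.toProd.2 y := by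
  intro x y π
  induction π with
  | nil => intro _ d hd; simp at hd
  | @cons x c y h π ih =>
    intro hnd d hd
    rw [SimpleGraph.Walk.edges_cons, List.nodup_cons] at hnd
    rw [SimpleGraph.Walk.darts_cons] at hd
    rcases List.mem_cons.mp hd with rfl | hd'
    · refine ⟨SimpleGraph.Reachable.refl _, ?_⟩
      refine ⟨π.toDeleteEdges _ ?_⟩
      intro e he heq
      rw [Set.mem_singleton_iff] at heq
      exact hnd.1 (heq ▸ he)
    · obtain ⟨hd1, hd2⟩ := ih hnd.2 d hd'
      have hedge : s(d.toProd.1, d.toProd.2) ∈ π.edges := by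
        have := List.mem_map_of_mem (f := SimpleGraph.Dart.edge) hd'
        simpa [SimpleGraph.Walk.edges, SimpleGraph.Dart.edge] using this
      have hne : s(x,c) ≠ s(d.toProd.1, d.toProd.2) := by
        intro he
        exact hnd.1 (he ▸ hedge)
      have hadj : (T.deleteEdges {s(d.toProd.1,d.toProd.2)}).Adj x c :=
        SimpleGraph.deleteEdges_adj.mpr ⟨h, by simp [hne]⟩
      exact ⟨hadj.reachable.trans hd1, hd2⟩

end Tree17

section Flower17

open SimpleGraph

variable {V : Type*} [Fintype V] [DecidableEq V] {G : SimpleGraph V} {S : Finset V}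

lemma flowerOf17_isFlower
    (hB : ∀ K', IsMaxClique G K' → S ⊆ K' → ∃ v, v ∈ K' ∧ v ∉ S)
    {K : Finset V} (hKmax : IsMaxClique G K) (hKS : S ⊆ K) :
    IsFlower G S (flowerOf17 G S K) ∧ K ∈ flowerOf17 G S K := by
  have hKmem : K ∈ flowerOf17 G S K := Relation.ReflTransGen.refl
  set U : Set V := (⋃ K' ∈ flowerOf17 G S K, (K' : Set V)) \ ↑S with hU
  have hmemU : ∀ {K' : Finset V} {u : V}, K' ∈ flowerOf17 G S K → u ∈ K' → u ∉ S → u ∈ U :=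
    fun h hu hus => ⟨Set.mem_biUnion h (Finset.mem_coe.mpr hu), by simpa using hus⟩
  obtain ⟨u₀, hu₀, hu₀s⟩ := hB K hKmax hKS
  have hu₀U : u₀ ∈ U := hmemU hKmem hu₀ hu₀s
  have clique_step : ∀ {K' : Finset V}, K' ∈ flowerOf17 G S K → ∀ {u v : V},
      u ∈ K' → v ∈ K' → ∀ (huU : u ∈ U) (hvU : v ∈ U),
      (G.induce U).Reachable ⟨u, huU⟩ ⟨v, hvU⟩ := by
    intro K' hK' u v hu hv huU hvU
    rcases eq_or_ne u v with rfl | hne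
    · exact Reachable.refl _
    · have hadj : G.Adj u v := (flowerOf17_mem_kset ⟨hKmax, hKS⟩ hK').1.1
        (Finset.mem_coe.mpr hu) (Finset.mem_coe.mpr hv) hne
      exact SimpleGraph.Adj.reachable (by simpa using hadj)
  have reach : ∀ {K' : Finset V}, K' ∈ flowerOf17 G S K → ∀ {u : V},
      u ∈ K' → ∀ (huU : u ∈ U), (G.induce U).Reachable ⟨u₀, hu₀U⟩ ⟨u, huU⟩ := by
    intro K' h
    induction h with
    | refl => intro u hu huU; exact clique_step hKmem hu₀ hu hu₀U huU
    | @tail K₁ K₂ h₁ step ih =>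
      intro u hu huU
      obtain ⟨_, _, w, v, hw, hws, hv, hvs, heq⟩ := id step
      have hwU : w ∈ U := hmemU h₁ hw hws
      have hvU : v ∈ U := hmemU (h₁.tail step) hv hvs
      have r1 := ih hw hwU
      have r2 : (G.induce U).Reachable ⟨w, hwU⟩ ⟨v, hvU⟩ := by
        rcases heq with rfl | hadj
        · exact Reachable.refl _
        · exact SimpleGraph.Adj.reachable (by simpa using hadj)
      exact (r1.trans r2).trans (clique_step (h₁.tail step) hv hu hvU huU)
  have hconnU : (G.induce U).Connected := by
    rw [SimpleGraph.connected_iff]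
    refine ⟨fun x y => ?_, ⟨⟨u₀, hu₀U⟩⟩⟩
    obtain ⟨Kx, hKx, hxKx⟩ := Set.mem_iUnion₂.mp x.2.1
    obtain ⟨Ky, hKy, hyKy⟩ := Set.mem_iUnion₂.mp y.2.1
    have rx := reach hKx (Finset.mem_coe.mp hxKx) x.2
    have ry := reach hKy (Finset.mem_coe.mp hyKy) y.2
    exact rx.symm.trans ry
  have cond1 : ∀ K' ∈ flowerOf17 G S K, IsMaxClique G K' ∧ S ⊆ K' :=
    fun K' h => flowerOf17_mem_kset ⟨hKmax, hKS⟩ h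
  have cond3 : ∀ F' : Set (Finset V), (∀ K'' ∈ F', IsMaxClique G K'' ∧ S ⊆ K'') →
      (G.induce ((⋃ K'' ∈ F', (K'' : Set V)) \ ↑S)).Connected →
      flowerOf17 G S K ⊆ F' → F' = flowerOf17 G S K := by
    intro F' hF1 hF2 hsub
    refine Set.Subset.antisymm ?_ hsub
    intro K' hK'
    obtain ⟨u', hu', hu's⟩ := hB K' (hF1 K' hK').1 (hF1 K' hK').2
    set U' : Set V := (⋃ K'' ∈ F', (K'' : Set V)) \ ↑S with hU'
    have hmemU' : ∀ {Kx : Finset V} {u : V}, Kx ∈ F' → u ∈ Kx → u ∉ S → u ∈ U' :=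
      fun h hu hus => ⟨Set.mem_biUnion h (Finset.mem_coe.mpr hu), by simpa using hus⟩
    have hKF' : K ∈ F' := hsub hKmem
    have h0 : u₀ ∈ U' := hmemU' hKF' hu₀ hu₀s
    have h1 : u' ∈ U' := hmemU' hK' hu' hu's
    obtain ⟨w⟩ := hF2.preconnected ⟨u₀, h0⟩ ⟨u', h1⟩
    have main : ∀ {x y : ↥U'} (_ : (G.induce U').Walk x y) (Kx : Finset V), Kx ∈ F' →
        ↑x ∈ Kx → Relation.ReflTransGen (Rrel17 G S) K Kx →
        ∀ Ky ∈ F', (↑y : V) ∈ Ky → Relation.ReflTransGen (Rrel17 G S) K Ky := by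
      intro x y w
      induction w with
      | @nil x =>
        intro Kx hKx hxKx hrtg Ky hKy hyKy
        refine hrtg.tail ?_
        have hxs : (x : V) ∉ S := fun h => x.2.2 (by simpa using h)
        exact ⟨hF1 _ hKx, hF1 _ hKy, ⟨x, x, hxKx, hxs, hyKy, hxs, Or.inl rfl⟩⟩
      | @cons a c y hadj w ih =>
        intro Kx hKx hxKx hrtg Ky hKy hyKy
        have hGadj : G.Adj ↑a ↑c := by simpa using hadj
        obtain ⟨Kc, hKc, hcKc⟩ := Set.mem_iUnion₂.mp c.2.1
        have has : (a : V) ∉ S := fun h => a.2.2 (by simpa using h)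
        have hcs : (c : V) ∉ S := fun h => c.2.2 (by simpa using h)
        have step : Rrel17 G S Kx Kc :=
          ⟨hF1 _ hKx, hF1 _ hKc, a, c, hxKx, has, Finset.mem_coe.mp hcKc, hcs, Or.inr hGadj⟩
        exact ih Kc hKc (Finset.mem_coe.mp hcKc) (hrtg.tail step) Ky hKy hyKy
    exact main w K hKF' hu₀ Relation.ReflTransGen.refl K' hK' hu'
  exact ⟨⟨cond1, hconnU, cond3⟩, hKmem⟩

lemma flower_unique17
    (hB : ∀ K', IsMaxClique G K' → S ⊆ K' → ∃ v, v ∈ K' ∧ v ∉ S)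
    {K : Finset V} (hKmax : IsMaxClique G K) (hKS : S ⊆ K)
    {F : Set (Finset V)} (hF : IsFlower G S F) (hKF : K ∈ F) :
    F = flowerOf17 G S K := by
  obtain ⟨hFl, hKfl⟩ := flowerOf17_isFlower hB hKmax hKS
  obtain ⟨u₀, hu₀, hu₀s⟩ := hB K hKmax hKS
  have hcond1 : ∀ K' ∈ F ∪ flowerOf17 G S K, IsMaxClique G K' ∧ S ⊆ K' := by
    rintro K' (h | h)
    exacts [hF.1 K' h, hFl.1 K' h]
  have hUeq : (⋃ K' ∈ F ∪ flowerOf17 G S K, (K' : Set V)) \ ↑S =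
      ((⋃ K' ∈ F, (K' : Set V)) \ ↑S) ∪ ((⋃ K' ∈ flowerOf17 G S K, (K' : Set V)) \ ↑S) := by
    rw [Set.biUnion_union, Set.union_diff_distrib]
  have hcommon : ((((⋃ K' ∈ F, (K' : Set V)) \ ↑S)) ∩
      ((⋃ K' ∈ flowerOf17 G S K, (K' : Set V)) \ ↑S)).Nonempty :=
    ⟨u₀, ⟨⟨Set.mem_biUnion hKF (Finset.mem_coe.mpr hu₀), by simpa using hu₀s⟩,
      ⟨Set.mem_biUnion hKfl (Finset.mem_coe.mpr hu₀), by simpa using hu₀s⟩⟩⟩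
  have hconn2 : (G.induce ((⋃ K' ∈ F ∪ flowerOf17 G S K, (K' : Set V)) \ ↑S)).Connected := by
    rw [hUeq]
    exact induce_union_connected17 hF.2.1 hFl.2.1 hcommon
  have h1 := hF.2.2 _ hcond1 hconn2 Set.subset_union_left
  have h2 := hFl.2.2 _ hcond1 hconn2 Set.subset_union_right
  exact h1.symm.trans h2

end Flower17

section Sep17

open SimpleGraph

variable {V : Type*} {ν : Type*} {T : SimpleGraph ν}

lemma same_side17 (hT : T.IsTree) {p q : ν} (hpq : T.Adj p q) {ι : ν → Finset V}
    (hcoh : ∀ u : V, (T.induce {x : ν | u ∈ ι x}).Connected) {u : V} {z₁ z₂ : ν}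
    (h1 : u ∈ ι z₁) (h2 : u ∈ ι z₂)
    (hz1 : (T.deleteEdges {s(p,q)}).Reachable z₁ p)
    (hz2 : (T.deleteEdges {s(p,q)}).Reachable z₂ q) :
    u ∈ ι p ∧ u ∈ ι q := by
  obtain ⟨w⟩ := (hcoh u).preconnected ⟨z₁, h1⟩ ⟨z₂, h2⟩
  have hsupp : ∀ m ∈ (w.map (SimpleGraph.Embedding.induce {x : ν | u ∈ ι x}).toHom).support,
      u ∈ ι m := by
    intro m hm
    rw [SimpleGraph.Walk.support_map] at hm
    obtain ⟨a, ha, rfl⟩ := List.mem_map.mp hm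
    exact a.2
  obtain ⟨hp', hq'⟩ :=
    side_cross17 hT hpq (w.map (SimpleGraph.Embedding.induce {x : ν | u ∈ ι x}).toHom) hz1 hz2
  exact ⟨hsupp p hp', hsupp q hq'⟩

lemma sep_walk17 [Fintype V] [DecidableEq V] {G : SimpleGraph V} (hT : T.IsTree)
    {ι : ν → Finset V}
    (hcoh : ∀ u : V, (T.induce {x : ν | u ∈ ι x}).Connected)
    (hcommon : ∀ u v : V, G.Adj u v → ∃ z : ν, u ∈ ι z ∧ v ∈ ι z)
    {p q : ν} (hpq : T.Adj p q) :
    ∀ {u u' : V} (w : G.Walk u u') {z z' : ν}, u ∈ ι z → u' ∈ ι z' →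
      (T.deleteEdges {s(p,q)}).Reachable z p → (T.deleteEdges {s(p,q)}).Reachable z' q →
      ∃ v ∈ w.support, v ∈ ι p ∧ v ∈ ι q := by
  intro u u' w
  induction w with
  | @nil u =>
    intro z z' hz hz' h1 h2
    exact ⟨u, by simp, same_side17 hT hpq hcoh hz hz' h1 h2⟩
  | @cons u c u' h w ih =>
    intro z z' hz hz' h1 h2
    obtain ⟨zc, hczc1, hczc2⟩ := hcommon u c h
    rcases side_total17 hT hpq zc with hzc | hzc
    · obtain ⟨v, hv, hvp⟩ := ih hczc2 hz' hzc h2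
      refine ⟨v, ?_, hvp⟩
      rw [SimpleGraph.Walk.support_cons]
      exact List.mem_cons_of_mem _ hv
    · exact ⟨u, by simp, same_side17 hT hpq hcoh hz hczc1 h1 hzc⟩

end Sep17

open SimpleGraph in
theorem stmt17 {V : Type*} [Fintype V] [DecidableEq V] {ν : Type*} [Fintype ν]
    (G : SimpleGraph V) (hconn : G.Connected) (hchord : IsChordal G)
    (T : SimpleGraph ν) (hT : T.IsTree) (r : ν) (ι : ν → Finset V)
    (hmax : ∀ x, IsMaxClique G (ι x)) (hinj : Function.Injective ι)
    (hsurj : ∀ K : Finset V, IsMaxClique G K → ∃ x, ι x = K)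
    (hcoh : ∀ u : V, (T.induce {x : ν | u ∈ ι x}).Connected)
    (S : Finset V) (hS : IsMinimalSeparator G S) :
    (∀ K : Finset V, IsMaxClique G K → S ⊆ K →
        ∃! F : Set (Finset V), IsFlower G S F ∧ K ∈ F) ∧
    ∃! F₀ : Set (Finset V), IsFlower G S F₀ ∧
      ∀ F : Set (Finset V), IsFlower G S F → F ≠ F₀ → FlowerPrec T r ι F₀ F := by
  classical
  obtain ⟨a, b, hab, hnadj, hsepS, hminS⟩ := hS
  -- every edge of G lies in some ι-clique
  have hcommon : ∀ u v : V, G.Adj u v → ∃ z : ν, u ∈ ι z ∧ v ∈ ι z := by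
    intro u v h
    have hcl : G.IsClique (↑({u, v} : Finset V)) := by
      rw [Finset.coe_insert, Finset.coe_singleton]
      rintro x (rfl | rfl) y (rfl | rfl) hxy
      · exact absurd rfl hxy
      · exact h
      · exact h.symm
      · exact absurd rfl hxy
    obtain ⟨K, hKmax, hsub⟩ := exists_maxclique_superset17 _ hcl
    obtain ⟨z, rfl⟩ := hsurj K hKmax
    exact ⟨z, hsub (by simp), hsub (by simp)⟩
  have hnode : ∀ v : V, ∃ z : ν, v ∈ ι z := by
    intro v
    have hcl : G.IsClique (↑({v} : Finset V)) := by
      rw [Finset.coe_singleton]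
      exact Set.pairwise_singleton v G.Adj
    obtain ⟨K, hKmax, hsub⟩ := exists_maxclique_superset17 _ hcl
    obtain ⟨z, rfl⟩ := hsurj K hKmax
    exact ⟨z, hsub (by simp)⟩
  obtain ⟨xa, hxa⟩ := hnode a
  obtain ⟨xb, hxb⟩ := hnode b
  -- building walks avoiding S while no fat edge on a tree walk
  have walk_avoid : ∀ {x y : ν} (π : T.Walk x y), b ∈ ι y →
      (∀ d ∈ π.darts, ∃ m, m ∈ ι d.toProd.1 ∧ m ∈ ι d.toProd.2 ∧ m ∉ S) →
      ∀ u, u ∈ ι x → u ∉ S → ∃ w : G.Walk u b, ∀ v ∈ w.support, v ∉ S := by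
    intro x y π
    induction π with
    | @nil x =>
      intro hxb _ u hu hus
      rcases eq_or_ne u b with rfl | hne
      · exact ⟨Walk.nil, by simp [hus]⟩
      · have hadj : G.Adj u b :=
          (hmax x).1 (Finset.mem_coe.mpr hu) (Finset.mem_coe.mpr hxb) hne
        refine ⟨Walk.cons hadj Walk.nil, ?_⟩
        intro v hv
        rw [Walk.support_cons] at hv
        rcases List.mem_cons.mp hv with rfl | hv'
        · exact hus
        · rw [Walk.support_nil] at hv'
          rcases List.mem_singleton.mp hv' with rfl
          exact hsepS.2.1
    | @cons x c y h π ih =>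
      intro hxb hdart u hu hus
      obtain ⟨m, hm1, hm2, hms⟩ := hdart ⟨(x, c), h⟩
        (by rw [Walk.darts_cons]; exact List.mem_cons_self)
      obtain ⟨w', hw'⟩ := ih hxb
        (fun d hd => hdart d (by rw [Walk.darts_cons]; exact List.mem_cons_of_mem _ hd)) m hm2 hms
      rcases eq_or_ne u m with rfl | hne
      · exact ⟨w', hw'⟩
      · have hadj : G.Adj u m := (hmax x).1 (Finset.mem_coe.mpr hu) (Finset.mem_coe.mpr hm1) hne
        refine ⟨Walk.cons hadj w', ?_⟩
        intro v hv
        rw [Walk.support_cons] at hv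
        rcases List.mem_cons.mp hv with rfl | hv'
        · exact hus
        · exact hw' v hv'
  -- find the tree edge whose label intersection is inside S
  have hedge : ∃ d : T.Dart, d ∈ (tpath17 hT xa xb).darts ∧
      ∀ m, m ∈ ι d.toProd.1 → m ∈ ι d.toProd.2 → m ∈ S := by
    by_contra hcon
    push_neg at hcon
    obtain ⟨w, hw⟩ := walk_avoid (tpath17 hT xa xb) hxb
      (fun d hd => by
        obtain ⟨m, hm1, hm2, hm3⟩ := hcon d hd
        exact ⟨m, hm1, hm2, hm3⟩) a hxa hsepS.1
    obtain ⟨v, hv, hvS⟩ := hsepS.2.2 w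
    exact hw v hv hvS
  obtain ⟨d, hd, hdS⟩ := hedge
  have hpq : T.Adj d.toProd.1 d.toProd.2 := d.adj
  have hsides := dart_sides17 hT (tpath17 hT xa xb)
    ((tpath17_isPath hT xa xb).isTrail.edges_nodup) d hd
  have hS'sub : ι d.toProd.1 ∩ ι d.toProd.2 ⊆ S := fun m hm =>
    hdS m (Finset.mem_inter.mp hm).1 (Finset.mem_inter.mp hm).2
  have hsep' : IsSeparator G a b (ι d.toProd.1 ∩ ι d.toProd.2) := by
    refine ⟨fun h => hsepS.1 (hS'sub h), fun h => hsepS.2.1 (hS'sub h), ?_⟩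
    intro w
    obtain ⟨v, hv, hvpq⟩ :=
      sep_walk17 hT hcoh hcommon hpq w hxa hxb hsides.1 hsides.2.symm
    exact ⟨v, hv, Finset.mem_inter.mpr ⟨hvpq.1, hvpq.2⟩⟩
  have hSeq : ι d.toProd.1 ∩ ι d.toProd.2 = S := by
    by_contra hne
    exact hminS _ (Finset.ssubset_iff_subset_ne.mpr ⟨hS'sub, hne⟩) hsep'
  have hpq_ne : ι d.toProd.1 ≠ ι d.toProd.2 := fun h => hpq.ne (hinj h)
  have hSp : S ⊆ ι d.toProd.1 := hSeq ▸ Finset.inter_subset_left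
  have hSp_ne : S ≠ ι d.toProd.1 := by
    intro h
    apply hpq_ne
    exact (hmax d.toProd.1).2 (ι d.toProd.2) (hmax d.toProd.2).1
      (Finset.inter_eq_left.mp (hSeq.trans h))
  -- Lemma B : every maximal clique containing S has a vertex outside S
  have hB : ∀ K', IsMaxClique G K' → S ⊆ K' → ∃ v, v ∈ K' ∧ v ∉ S := by
    intro K' hK' hSK'
    rcases eq_or_ne K' S with rfl | hne
    · exact absurd ((hK'.2 (ι d.toProd.1) (hmax d.toProd.1).1 hSp).symm.symm) fun h => hSp_ne h
    · obtain ⟨v, hv1, hv2⟩ :=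
        Finset.exists_of_ssubset (Finset.ssubset_iff_subset_ne.mpr ⟨hSK', hne.symm⟩)
      exact ⟨v, hv1, hv2⟩
  -- PART 1
  have part1 : ∀ K : Finset V, IsMaxClique G K → S ⊆ K →
      ∃! F : Set (Finset V), IsFlower G S F ∧ K ∈ F := by
    intro K hKm hKS
    obtain ⟨hfl, hmem⟩ := flowerOf17_isFlower hB hKm hKS
    exact ⟨flowerOf17 G S K, ⟨hfl, hmem⟩,
      fun F hF => flower_unique17 hB hKm hKS hF.1 hF.2⟩
  refine ⟨part1, ?_⟩
  -- PART 2
  obtain ⟨x₀, hx₀N, hx₀min⟩ := Finset.exists_min_image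
    (Finset.univ.filter fun z : ν => S ⊆ ι z) (fun z => (tpath17 hT z r).length)
    ⟨d.toProd.1, by simp [hSp]⟩
  simp only [Finset.mem_filter, Finset.mem_univ, true_and] at hx₀N hx₀min
  -- N is path closed
  have hPC : ∀ {z w : ν}, S ⊆ ι z → S ⊆ ι w → ∀ m ∈ (tpath17 hT z w).support, S ⊆ ι m := by
    intro z w hz hw m hm s hs
    obtain ⟨ww⟩ := (hcoh s).preconnected ⟨z, hz hs⟩ ⟨w, hw hs⟩
    have hpathb : ((ww.map (SimpleGraph.Embedding.induce {x : ν | s ∈ ι x}).toHom)).bypass.IsPath :=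
      Walk.bypass_isPath _
    have heqt : ((ww.map (SimpleGraph.Embedding.induce {x : ν | s ∈ ι x}).toHom)).bypass =
        tpath17 hT z w := tpath17_unique hT _ hpathb
    have hm2 : m ∈ ((ww.map (SimpleGraph.Embedding.induce {x : ν | s ∈ ι x}).toHom)).support := by
      rw [← heqt] at hm
      exact Walk.support_bypass_subset _ hm
    rw [Walk.support_map] at hm2
    obtain ⟨aa, haa, rfl⟩ := List.mem_map.mp hm2
    exact aa.2
  -- x₀ lies on every path to the root from N
  have hx₀key : ∀ {z : ν}, S ⊆ ι z → x₀ ∈ (tpath17 hT z r).support := by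
    intro z hz
    obtain ⟨m, hm1, hm2, hm3⟩ := tpath17_med hT r (tpath17 hT z x₀) (tpath17_isPath hT z x₀)
    have hmN : S ⊆ ι m := hPC hz hx₀N m hm1
    have hlen := tpath17_length_split hT hm3
    have hle := hx₀min m hmN
    have h0 : (tpath17 hT x₀ m).length = 0 := by omega
    have hmeq : x₀ = m := Walk.eq_of_length_eq_zero h0
    rw [hmeq]
    exact hm2
  obtain ⟨hF₀fl, hF₀mem⟩ := flowerOf17_isFlower hB (hmax x₀) hx₀N
  -- the precedence property for F₀
  have hprec0 : ∀ F : Set (Finset V), IsFlower G S F → F ≠ flowerOf17 G S (ι x₀) →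
      FlowerPrec T r ι (flowerOf17 G S (ι x₀)) F := by
    intro F hF _
    obtain ⟨⟨v, hvU⟩⟩ := hF.2.1.nonempty
    obtain ⟨K, hKF, hvK⟩ := Set.mem_iUnion₂.mp hvU.1
    obtain ⟨y, rfl⟩ := hsurj K (hF.1 K hKF).1
    have hyN : S ⊆ ι y := (hF.1 _ hKF).2
    exact ⟨x₀, y, tpath17 hT y r, tpath17_isPath hT y r, hKF, hF₀mem, hx₀key hyN⟩
  -- flowers are path closed in the tree
  have hclosed : ∀ (F : Set (Finset V)), IsFlower G S F → ∀ {z z' : ν} (π : T.Walk z z'),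
      π.IsPath → ι z ∈ F → ι z' ∈ F → ∀ m ∈ π.support, ι m ∈ F := by
    intro F hF z z' π
    induction π with
    | @nil z =>
      intro _ hz _ m hm
      rw [Walk.support_nil] at hm
      rcases List.mem_singleton.mp hm with rfl
      exact hz
    | @cons z c z' h π ih =>
      intro hp hz hz' m hm
      have hSz : S ⊆ ι z := (hF.1 _ hz).2
      have hSz' : S ⊆ ι z' := (hF.1 _ hz').2
      have htp : Walk.cons h π = tpath17 hT z z' := tpath17_unique hT _ hp
      have hcsup : c ∈ (tpath17 hT z z').support := by
        rw [← htp, Walk.support_cons]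
        exact List.mem_cons_of_mem _ (Walk.start_mem_support _)
      have hSc : S ⊆ ι c := hPC hSz hSz' c hcsup
      have hcF : ι c ∈ F := by
        by_cases hex : ∃ m', m' ∈ ι z ∧ m' ∈ ι c ∧ m' ∉ S
        · obtain ⟨m', h1, h2, h3⟩ := hex
          have hFeq : F = flowerOf17 G S (ι z) := flower_unique17 hB (hmax z) hSz hF hz
          rw [hFeq]
          exact Relation.ReflTransGen.single
            ⟨⟨hmax z, hSz⟩, ⟨hmax c, hSc⟩, m', m', h1, h3, h2, h3, Or.inl rfl⟩
        · exfalso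
          push_neg at hex
          obtain ⟨u, hu, hus⟩ := hB (ι z) (hmax z) hSz
          obtain ⟨u', hu', hu's⟩ := hB (ι z') (hmax z') hSz'
          have huU : u ∈ (⋃ K' ∈ F, (K' : Set V)) \ ↑S :=
            ⟨Set.mem_biUnion hz (Finset.mem_coe.mpr hu), by simpa using hus⟩
          have hu'U : u' ∈ (⋃ K' ∈ F, (K' : Set V)) \ ↑S :=
            ⟨Set.mem_biUnion hz' (Finset.mem_coe.mpr hu'), by simpa using hu's⟩
          obtain ⟨ww⟩ := hF.2.1.preconnected ⟨u, huU⟩ ⟨u', hu'U⟩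
          have hsup : ∀ v' ∈ ((ww.map (SimpleGraph.Embedding.induce _).toHom)).support,
              v' ∉ S := by
            intro v' hv'
            rw [Walk.support_map] at hv'
            obtain ⟨aa, haa, rfl⟩ := List.mem_map.mp hv'
            exact fun hc => aa.2.2 (by simpa using hc)
          have hnd := hp.isTrail.edges_nodup
          rw [Walk.edges_cons, List.nodup_cons] at hnd
          have hz'side : (T.deleteEdges {s(z,c)}).Reachable z' c := by
            refine Reachable.symm ⟨π.toDeleteEdges _ ?_⟩
            intro e he heq
            rw [Set.mem_singleton_iff] at heq
            exact hnd.1 (heq ▸ he)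
          obtain ⟨v', hv', hv'zc⟩ := sep_walk17 hT hcoh hcommon h
            (ww.map (SimpleGraph.Embedding.induce _).toHom) hu hu'
            (Reachable.refl z) hz'side
          exact hsup v' hv' (hex v' hv'zc.1 hv'zc.2)
      rw [Walk.support_cons] at hm
      rcases List.mem_cons.mp hm with rfl | hm'
      · exact hz
      · exact ih hp.of_cons hcF hz' m hm'
  -- assemble Part 2
  refine ⟨flowerOf17 G S (ι x₀), ⟨hF₀fl, hprec0⟩, ?_⟩
  rintro F₁ ⟨hF₁fl, hF₁prec⟩
  by_contra hne
  have hdisj : ∀ K', K' ∈ flowerOf17 G S (ι x₀) → K' ∈ F₁ → False := by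
    intro K' h0 h1
    exact hne ((part1 K' (hF₀fl.1 K' h0).1 (hF₀fl.1 K' h0).2).unique ⟨hF₁fl, h1⟩ ⟨hF₀fl, h0⟩)
  obtain ⟨x, y, pw, hpw, hyF₀, hxF₁, hxs⟩ := hF₁prec (flowerOf17 G S (ι x₀)) hF₀fl
    (fun hh => hne hh.symm)
  have hpweq : pw = tpath17 hT y r := tpath17_unique hT pw hpw
  rw [hpweq] at hxs
  have hyN : S ⊆ ι y := (hF₀fl.1 _ hyF₀).2
  have hxN : S ⊆ ι x := (hF₁fl.1 _ hxF₁).2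
  have hx₀y : x₀ ∈ (tpath17 hT y r).support := hx₀key hyN
  rw [tpath17_split hT hx₀y, Walk.mem_support_append_iff] at hxs
  rcases hxs with hxs | hxs
  · have hxf : ι x ∈ flowerOf17 G S (ι x₀) :=
      hclosed (flowerOf17 G S (ι x₀)) hF₀fl (tpath17 hT y x₀)
        (tpath17_isPath hT y x₀) hyF₀ hF₀mem x hxs
    exact hdisj _ hxf hxF₁
  · have hlen := tpath17_length_split hT hxs
    have hle := hx₀min x hxN
    have h0 : (tpath17 hT x₀ x).length = 0 := by omega
    have hxeq : x₀ = x := Walk.eq_of_length_eq_zero h0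
    exact hdisj (ι x) (by rw [← hxeq]; exact hF₀mem) hxF₁
end
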